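/- arXiv:2302.11287 — 9 statements merged into one kernel-verified Lean document; each statement's English description precedes it below -/
import Mathlib

section
/- Let (x_n) be a semi-normalized basic sequence in the unit ball of a Banach space X. If (x_n) dominates all of its subsequences (i.e., for each subsequence there is a constant witnessing domination), then there exist a constant C ≥ 1 and a subsequence (x'_n) of (x_n) such that (x_n) C-dominates every subsequence of (x'_n). -/
open Finset Filter Topology

private lemma sum_range_add' {M : Type*} [AddCommMonoid M] (g : ℕ → M) (N n : ℕ) :
    ∑ i ∈ Finset.range (N + n), g i
      = ∑ i ∈ Finset.range N, g i + ∑ j ∈ Finset.range n, g (N + j) := by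
  induction n with
  | zero => simp
  | succ n ih =>
    rw [← Nat.add_assoc, Finset.sum_range_succ, ih, Finset.sum_range_succ, add_assoc]

/-- Proposition 2.2: Let `(x_n)` be a semi-normalized basic
sequence in the unit ball of a Banach space `X`. If `(x_n)` dominates all of
its subsequences, then there are `C ≥ 1` and a subsequence `(x'_n)` of `(x_n)`
such that `(x_n)` `C`-dominates every subsequence of `(x'_n)`. -/
theorem dominating_subsequence_uniform_constant
    {X : Type*} [NormedAddCommGroup X] [NormedSpace ℝ X] [CompleteSpace X]
    (x : ℕ → X)
    -- `(x_n)` is a basic sequence (uniformly bounded basis projections)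
    (hbasic : ∃ K : ℝ, ∀ (m n : ℕ) (a : ℕ → ℝ), m ≤ n →
      ‖∑ i ∈ Finset.range m, a i • x i‖ ≤ K * ‖∑ i ∈ Finset.range n, a i • x i‖)
    -- semi-normalized
    (hsemi : ∃ c C : ℝ, 0 < c ∧ ∀ n, c ≤ ‖x n‖ ∧ ‖x n‖ ≤ C)
    -- in the unit ball
    (hball : ∀ n, ‖x n‖ ≤ 1)
    -- `(x_n)` dominates all of its subsequences
    (hdom : ∀ φ : ℕ → ℕ, StrictMono φ → ∃ C : ℝ, ∀ (n : ℕ) (a : ℕ → ℝ),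
      ‖∑ i ∈ Finset.range n, a i • x (φ i)‖ ≤ C * ‖∑ i ∈ Finset.range n, a i • x i‖) :
    ∃ C : ℝ, 1 ≤ C ∧ ∃ φ : ℕ → ℕ, StrictMono φ ∧
      ∀ ψ : ℕ → ℕ, StrictMono ψ → ∀ (n : ℕ) (a : ℕ → ℝ),
        ‖∑ i ∈ Finset.range n, a i • x (φ (ψ i))‖ ≤
          C * ‖∑ i ∈ Finset.range n, a i • x i‖ := by
  classical
  clear hbasic hsemi hball
  -- The Polish space of strictly monotone sequences
  set S : Set (ℕ → ℕ) := {f | StrictMono f} with hSdef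
  have hSclosed : IsClosed S := by
    have hrw : S = ⋂ n, {f : ℕ → ℕ | f n < f (n + 1)} := by
      ext f
      simp only [hSdef, Set.mem_iInter, Set.mem_setOf_eq]
      exact ⟨fun h n => h (Nat.lt_succ_self n), strictMono_nat_of_lt_succ⟩
    rw [hrw]
    refine isClosed_iInter fun n => ?_
    have hc : Continuous fun f : ℕ → ℕ => (f n, f (n + 1)) :=
      (continuous_apply n).prodMk (continuous_apply (n + 1))
    exact (isClosed_discrete {p : ℕ × ℕ | p.1 < p.2}).preimage hc
  haveI : (uniformity S).IsCountablyGenerated := by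
    rw [uniformity_subtype]
    exact Filter.comap.isCountablyGenerated _ _
  haveI : CompleteSpace S := hSclosed.isComplete.completeSpace_coe
  haveI : Nonempty S := ⟨⟨id, strictMono_id⟩⟩
  -- The closed cover
  set F : ℕ → Set S := fun k =>
    {φ : S | ∀ (n : ℕ) (a : ℕ → ℝ),
      ‖∑ i ∈ Finset.range n, a i • x (φ.1 i)‖
        ≤ (k : ℝ) * ‖∑ i ∈ Finset.range n, a i • x i‖} with hFdef
  have hFclosed : ∀ k : ℕ, IsClosed (F k) := by
    intro k
    have hrw : F k = ⋂ (n : ℕ), ⋂ (a : ℕ → ℝ),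
        {φ : S | ‖∑ i ∈ Finset.range n, a i • x (φ.1 i)‖
          ≤ (k : ℝ) * ‖∑ i ∈ Finset.range n, a i • x i‖} := by
      ext φ; simp [hFdef, Set.mem_iInter]
    rw [hrw]
    refine isClosed_iInter fun n => isClosed_iInter fun a => ?_
    refine isClosed_le ?_ continuous_const
    refine Continuous.norm ?_
    refine continuous_finset_sum _ fun i _ => Continuous.const_smul ?_ (a i)
    exact (continuous_of_discreteTopology (f := x)).comp
      ((continuous_apply i).comp continuous_subtype_val)
  have hcov : ⋃ k, F k = Set.univ := by
    ext φ
    simp only [Set.mem_iUnion, Set.mem_univ, iff_true]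
    obtain ⟨C, hC⟩ := hdom φ.1 φ.2
    refine ⟨⌈max C 0⌉₊, fun n a => (hC n a).trans ?_⟩
    exact mul_le_mul_of_nonneg_right ((le_max_left _ _).trans (Nat.le_ceil _))
      (norm_nonneg _)
  obtain ⟨k, σ, hσ⟩ := nonempty_interior_of_iUnion_of_closed hFclosed hcov
  -- extract a cylinder neighborhood
  rw [mem_interior_iff_mem_nhds, nhds_subtype_eq_comap, Filter.mem_comap] at hσ
  obtain ⟨U, hU, hUsub⟩ := hσ
  rw [mem_nhds_iff] at hU
  obtain ⟨V, hVU, hVopen, hσV⟩ := hU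
  obtain ⟨I, u, hu, hpi⟩ := isOpen_pi_iff.1 hVopen σ.1 hσV
  set N : ℕ := I.sup id + 1 with hNdef
  have hIN : ∀ i ∈ I, i < N := fun i hi =>
    Nat.lt_succ_of_le (Finset.le_sup (f := id) hi)
  -- key: any strictly monotone map agreeing with σ below N lies in F k
  have hkey : ∀ f : ℕ → ℕ, (hf : StrictMono f) → (∀ i < N, f i = σ.1 i) →
      ∀ (n : ℕ) (a : ℕ → ℝ),
        ‖∑ i ∈ Finset.range n, a i • x (f i)‖
          ≤ (k : ℝ) * ‖∑ i ∈ Finset.range n, a i • x i‖ := by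
    intro f hf hagree
    have hfV : f ∈ V := by
      apply hpi
      intro i hi
      rw [hagree i (hIN i hi)]
      exact (hu i hi).2
    exact hUsub (show (⟨f, hf⟩ : S).1 ∈ U from hVU hfV)
  -- the subsequence
  set φ : ℕ → ℕ := fun n => σ.1 (N + n) with hφdef
  have hφmono : StrictMono φ := fun a b hab => σ.2 (Nat.add_lt_add_left hab N)
  -- shift domination constant
  obtain ⟨C₀, hC₀⟩ := hdom (fun j => N + j) (fun a b hab => Nat.add_lt_add_left hab N)
  refine ⟨max 1 ((k : ℝ) * max C₀ 1), le_max_left _ _, φ, hφmono, ?_⟩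
  intro ψ hψ n a
  -- spliced sequence
  set θ : ℕ → ℕ := fun i => if i < N then σ.1 i else σ.1 (N + ψ (i - N)) with hθdef
  have hθmono : StrictMono θ := by
    apply strictMono_nat_of_lt_succ
    intro i
    simp only [hθdef]
    by_cases h1 : i + 1 < N
    · rw [if_pos (by omega), if_pos h1]
      exact σ.2 (Nat.lt_succ_self i)
    · by_cases h2 : i < N
      · rw [if_pos h2, if_neg h1]
        exact σ.2 (by omega)
      · rw [if_neg h2, if_neg h1]
        refine σ.2 ?_
        have : ψ (i - N) < ψ (i + 1 - N) := hψ (by omega)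
        omega
  have hθagree : ∀ i < N, θ i = σ.1 i := fun i hi => if_pos hi
  have hθF := hkey θ hθmono hθagree (N + n)
    (fun i => if i < N then 0 else a (i - N))
  set b : ℕ → ℝ := fun i => if i < N then 0 else a (i - N) with hbdef
  have h1 : ∑ i ∈ Finset.range (N + n), b i • x (θ i)
      = ∑ j ∈ Finset.range n, a j • x (φ (ψ j)) := by
    rw [sum_range_add']
    have hz : ∑ i ∈ Finset.range N, b i • x (θ i) = 0 := by
      apply Finset.sum_eq_zero
      intro i hi
      have : b i = 0 := if_pos (Finset.mem_range.1 hi)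
      rw [this, zero_smul]
    rw [hz, zero_add]
    apply Finset.sum_congr rfl
    intro j _
    have hb : b (N + j) = a j := by
      simp only [hbdef]
      rw [if_neg (by omega)]
      congr 1
      omega
    have hθ : θ (N + j) = φ (ψ j) := by
      simp only [hθdef, hφdef]
      rw [if_neg (by omega), Nat.add_sub_cancel_left]
    rw [hb, hθ]
  have h2 : ∑ i ∈ Finset.range (N + n), b i • x i
      = ∑ j ∈ Finset.range n, a j • x (N + j) := by
    rw [sum_range_add']
    have hz : ∑ i ∈ Finset.range N, b i • x i = 0 := by
      apply Finset.sum_eq_zero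
      intro i hi
      have : b i = 0 := if_pos (Finset.mem_range.1 hi)
      rw [this, zero_smul]
    rw [hz, zero_add]
    apply Finset.sum_congr rfl
    intro j _
    have hb : b (N + j) = a j := by
      simp only [hbdef]
      rw [if_neg (by omega)]
      congr 1
      omega
    rw [hb]
  rw [h1, h2] at hθF
  calc ‖∑ i ∈ Finset.range n, a i • x (φ (ψ i))‖
      ≤ (k : ℝ) * ‖∑ j ∈ Finset.range n, a j • x (N + j)‖ := hθF
    _ ≤ (k : ℝ) * (max C₀ 1 * ‖∑ i ∈ Finset.range n, a i • x i‖) := by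
        refine mul_le_mul_of_nonneg_left ?_ (Nat.cast_nonneg k)
        exact (hC₀ n a).trans (mul_le_mul_of_nonneg_right (le_max_left _ _)
          (norm_nonneg _))
    _ ≤ max 1 ((k : ℝ) * max C₀ 1) * ‖∑ i ∈ Finset.range n, a i • x i‖ := by
        rw [← mul_assoc]
        exact mul_le_mul_of_nonneg_right (le_max_right _ _) (norm_nonneg _)
end

section
/- Let (x_n) be a 𝔱-premonotone basic sequence in a Banach space X, i.e., there exists an integer k ≥ 2 such that the tail projections Q_n(∑ a_i x_i) = ∑_{i≥n} a_i x_i satisfy ‖Q_n‖ = 1 for all n ≥ k. Then for every sequence (α_n) in [0,1) increasing to 1 and all scalars (a_i)_{i=1}^m, one has ‖∑_{n=k}^m α_n a_n x_n‖ ≤ ‖∑_{n=1}^m a_n x_n‖. -/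
open Finset Filter Topology

private lemma tele_aux (α : ℕ → ℝ) (k : ℕ) :
    ∀ n, k ≤ n → ∑ i ∈ Finset.Icc (k+1) n, (α i - α (i-1)) = α n - α k := by
  intro n hn
  induction n, hn using Nat.le_induction with
  | base => simp
  | succ n hn ih =>
    rw [Finset.sum_Icc_succ_top (by omega : k+1 ≤ n+1), ih]
    simp

private lemma abel_aux {X : Type*} [NormedAddCommGroup X] [NormedSpace ℝ X]
    (x : ℕ → X) (α a : ℕ → ℝ) (k m : ℕ) (hm : k ≤ m) :
    ∑ n ∈ Finset.Icc k m, (α n * a n) • x n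
      = α k • (∑ n ∈ Finset.Icc k m, a n • x n)
        + ∑ i ∈ Finset.Icc (k+1) m, (α i - α (i-1)) • ∑ n ∈ Finset.Icc i m, a n • x n := by
  have hsplit : ∀ (f : ℕ → X), ∑ n ∈ Finset.Icc k m, f n = f k + ∑ n ∈ Finset.Icc (k+1) m, f n := by
    intro f
    rw [Finset.Icc_add_one_left_eq_Ioc, Finset.Icc_eq_cons_Ioc hm, Finset.sum_cons]
  rw [hsplit, hsplit (fun n => a n • x n), smul_add, Finset.smul_sum]
  have hswap : ∑ i ∈ Finset.Icc (k+1) m, (α i - α (i-1)) • ∑ n ∈ Finset.Icc i m, a n • x n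
      = ∑ n ∈ Finset.Icc (k+1) m, (α n - α k) • (a n • x n) := by
    calc ∑ i ∈ Finset.Icc (k+1) m, (α i - α (i-1)) • ∑ n ∈ Finset.Icc i m, a n • x n
        = ∑ i ∈ Finset.Icc (k+1) m, ∑ n ∈ Finset.Icc i m, (α i - α (i-1)) • (a n • x n) := by
          simp [Finset.smul_sum]
      _ = ∑ n ∈ Finset.Icc (k+1) m, ∑ i ∈ Finset.Icc (k+1) n, (α i - α (i-1)) • (a n • x n) := by
          apply Finset.sum_comm'
          intro i n
          simp only [Finset.mem_Icc]
          omega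
      _ = ∑ n ∈ Finset.Icc (k+1) m, (α n - α k) • (a n • x n) := by
          refine Finset.sum_congr rfl fun n hn => ?_
          rw [← Finset.sum_smul, tele_aux α k n (by simp [Finset.mem_Icc] at hn; omega)]
  rw [hswap, add_assoc, ← Finset.sum_add_distrib]
  congr 1
  · rw [mul_smul]
  · refine Finset.sum_congr rfl fun n _ => ?_
    rw [← add_smul, mul_smul]
    congr 1
    ring

/-- Proposition 3.4: If `(x_n)` is a `𝔱`-premonotone basic
sequence (there is `k ≥ 2` with `‖Q_n‖ = 1` for all `n ≥ k`, where `Q_n` is the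
tail projection; the inequality `‖Q_n y‖ ≤ ‖y‖` is expressed on finite linear
combinations, which are dense in the closed span), then for every sequence
`(α_n) ⊆ [0,1)` increasing to `1` and all scalars one has
`‖∑_{n=k}^m α_n a_n x_n‖ ≤ ‖∑_{n=1}^m a_n x_n‖`. -/
theorem t_premonotone_Nk1
    {X : Type*} [NormedAddCommGroup X] [NormedSpace ℝ X] [CompleteSpace X]
    (x : ℕ → X)
    -- `(x_n)` is a basic sequence
    (hbasic : ∃ K : ℝ, ∀ (m n : ℕ) (a : ℕ → ℝ), m ≤ n →
      ‖∑ i ∈ Finset.Icc 1 m, a i • x i‖ ≤ K * ‖∑ i ∈ Finset.Icc 1 n, a i • x i‖)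
    (k : ℕ) (hk : 2 ≤ k)
    -- 𝔱-premonotonicity: `‖Q_n‖ ≤ 1` for every `n ≥ k`
    (htp : ∀ n, k ≤ n → ∀ (m : ℕ) (a : ℕ → ℝ),
      ‖∑ i ∈ Finset.Icc n m, a i • x i‖ ≤ ‖∑ i ∈ Finset.Icc 1 m, a i • x i‖) :
    ∀ α : ℕ → ℝ, (∀ n, 0 ≤ α n ∧ α n < 1) → Monotone α →
      Tendsto α atTop (𝓝 1) →
      ∀ (m : ℕ) (a : ℕ → ℝ),
        ‖∑ n ∈ Finset.Icc k m, (α n * a n) • x n‖ ≤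
          ‖∑ n ∈ Finset.Icc 1 m, a n • x n‖ := by
  intro α hα hmono _ m a
  by_cases hm : k ≤ m
  · set S := ‖∑ n ∈ Finset.Icc 1 m, a n • x n‖ with hS
    have hS0 : 0 ≤ S := norm_nonneg _
    rw [abel_aux x α a k m hm]
    calc ‖α k • (∑ n ∈ Finset.Icc k m, a n • x n)
          + ∑ i ∈ Finset.Icc (k+1) m, (α i - α (i-1)) • ∑ n ∈ Finset.Icc i m, a n • x n‖
        ≤ ‖α k • (∑ n ∈ Finset.Icc k m, a n • x n)‖
          + ‖∑ i ∈ Finset.Icc (k+1) m, (α i - α (i-1)) • ∑ n ∈ Finset.Icc i m, a n • x n‖ :=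
          norm_add_le _ _
      _ ≤ α k * S + ∑ i ∈ Finset.Icc (k+1) m, (α i - α (i-1)) * S := by
          gcongr
          · rw [norm_smul, Real.norm_eq_abs, abs_of_nonneg (hα k).1]
            exact mul_le_mul_of_nonneg_left (htp k le_rfl m a) (hα k).1
          · refine (norm_sum_le _ _).trans (Finset.sum_le_sum fun i hi => ?_)
            simp only [Finset.mem_Icc] at hi
            rw [norm_smul, Real.norm_eq_abs,
              abs_of_nonneg (by linarith [hmono (by omega : i - 1 ≤ i)] : (0:ℝ) ≤ α i - α (i-1))]
            exact mul_le_mul_of_nonneg_left (htp i (by omega) m a)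
              (by linarith [hmono (by omega : i - 1 ≤ i)])
      _ = α m * S := by
          rw [← Finset.sum_mul, tele_aux α k m hm]; ring
      _ ≤ 1 * S := by
          exact mul_le_mul_of_nonneg_right (le_of_lt (hα m).2) hS0
      _ = S := one_mul S
  · rw [Finset.Icc_eq_empty (by omega), Finset.sum_empty, norm_zero]
    exact norm_nonneg _
end

section
/- Let X be a Banach space containing a c₀-sequence (x_n) (a basic sequence equivalent to the unit vector basis of c₀) having the (N_k1) property for some k ∈ ℕ: there exists a sequence (α_n) ⊂ [0,1) converging to 1 with ‖∑_{n=k}^∞ α_n a_n x_n‖ ≤ ‖∑_{n=1}^∞ a_n x_n‖ for all (a_n) ∈ c₀. Then there exist a nonempty closed bounded convex set K ⊆ X and an affine nonexpansive map T: K → K with no fixed point; explicitly, K = { ∑_{n=1}^∞ t_n x_n : 0 ≤ t_n ≤ 1 for all n } and T(∑ t_n x_n) = ∑_{n=k}^∞ α_n t_n x_n + ∑_{n=k}^∞ (1−α_n) x_n is affine, nonexpansive, and fixed point free on K. -/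
open Finset Filter Topology

section Aux

variable {X : Type*} [NormedAddCommGroup X] [NormedSpace ℝ X] [CompleteSpace X]

lemma aux_isup_le {n : ℕ} {a : ℕ → ℝ} {M : ℝ} (hM : 0 ≤ M)
    (h : ∀ i ∈ Finset.range n, |a i| ≤ M) :
    (⨆ i ∈ Finset.range n, |a i|) ≤ M :=
  Real.iSup_le (fun i => Real.iSup_le (fun hi => h i hi) hM) hM

lemma aux_sum_le {B : ℝ} (hB : 0 ≤ B) (x : ℕ → X)
    (hupp : ∀ (n : ℕ) (a : ℕ → ℝ),
      ‖∑ i ∈ Finset.range n, a i • x i‖ ≤ B * ⨆ i ∈ Finset.range n, |a i|)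
    {M : ℝ} (hM : 0 ≤ M) (n : ℕ) (a : ℕ → ℝ)
    (h : ∀ i ∈ Finset.range n, |a i| ≤ M) :
    ‖∑ i ∈ Finset.range n, a i • x i‖ ≤ B * M :=
  (hupp n a).trans (mul_le_mul_of_nonneg_left (aux_isup_le hM h) hB)

lemma aux_summable {B : ℝ} (hB : 0 < B) (x : ℕ → X)
    (hupp : ∀ (n : ℕ) (a : ℕ → ℝ),
      ‖∑ i ∈ Finset.range n, a i • x i‖ ≤ B * ⨆ i ∈ Finset.range n, |a i|)
    {a : ℕ → ℝ} (ha : Tendsto a atTop (𝓝 0)) :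
    Summable fun n => a n • x n := by
  rw [summable_iff_vanishing]
  intro e he
  rcases Metric.mem_nhds_iff.mp he with ⟨ε, hε, hball⟩
  have hδ : (0:ℝ) < ε / (2 * B) := by positivity
  rcases Metric.tendsto_atTop.mp ha (ε / (2 * B)) hδ with ⟨N, hN⟩
  refine ⟨Finset.range N, fun s hs => ?_⟩
  apply hball
  rw [Metric.mem_ball, dist_zero_right]
  rcases Finset.exists_nat_subset_range s with ⟨n, hsn⟩
  set a' : ℕ → ℝ := fun i => if i ∈ s then a i else 0 with ha'
  have hsum : ∑ i ∈ s, a i • x i = ∑ i ∈ Finset.range n, a' i • x i := by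
    rw [show ∑ i ∈ s, a i • x i = ∑ i ∈ s, a' i • x i from
      Finset.sum_congr rfl fun i hi => by simp [ha', hi]]
    exact Finset.sum_subset hsn (fun i _ his => by simp [ha', his])
  have hbound : ∀ i ∈ Finset.range n, |a' i| ≤ ε / (2 * B) := by
    intro i _
    by_cases his : i ∈ s
    · have hiN : N ≤ i := by
        by_contra hlt
        exact (Finset.disjoint_left.mp hs his) (Finset.mem_range.mpr (not_le.mp hlt))
      have := hN i hiN
      rw [Real.dist_eq, sub_zero] at this
      simp only [ha', his, if_pos]
      exact this.le
    · simp [ha', his, hδ.le]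
  have := aux_sum_le hB.le x hupp hδ.le n a' hbound
  have heq : B * (ε / (2 * B)) = ε / 2 := by field_simp
  rw [hsum]
  calc ‖∑ i ∈ Finset.range n, a' i • x i‖ ≤ B * (ε / (2 * B)) := this
    _ = ε / 2 := heq
    _ < ε := by linarith

lemma aux_tsum_le {B : ℝ} (hB : 0 ≤ B) (x : ℕ → X)
    (hupp : ∀ (n : ℕ) (a : ℕ → ℝ),
      ‖∑ i ∈ Finset.range n, a i • x i‖ ≤ B * ⨆ i ∈ Finset.range n, |a i|)
    {a : ℕ → ℝ} {M : ℝ} (hM : 0 ≤ M)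
    (hs : Summable fun n => a n • x n) (h : ∀ n, |a n| ≤ M) :
    ‖∑' n, a n • x n‖ ≤ B * M :=
  le_of_tendsto hs.hasSum.tendsto_sum_nat.norm (Filter.Eventually.of_forall fun n =>
    aux_sum_le hB x hupp hM n a fun i _ => h i)

lemma aux_tsum_lower {A : ℝ} (x : ℕ → X)
    (hlow : ∀ (n : ℕ) (a : ℕ → ℝ) (j : ℕ), j < n →
      A * |a j| ≤ ‖∑ i ∈ Finset.range n, a i • x i‖)
    {a : ℕ → ℝ} (hs : Summable fun n => a n • x n) (j : ℕ) :
    A * |a j| ≤ ‖∑' n, a n • x n‖ := by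
  refine ge_of_tendsto hs.hasSum.tendsto_sum_nat.norm ?_
  filter_upwards [Filter.eventually_ge_atTop (j + 1)] with n hn
  exact hlow n a j (Nat.lt_of_lt_of_le (Nat.lt_succ_self j) hn)

lemma aux_tsum_sub (x : ℕ → X) {a b : ℕ → ℝ}
    (sa : Summable fun n => a n • x n) (sb : Summable fun n => b n • x n) :
    ∑' n, (a n - b n) • x n = ∑' n, a n • x n - ∑' n, b n • x n := by
  have h := sa.hasSum.sub sb.hasSum
  rw [show (fun n => (a n - b n) • x n) = fun n => a n • x n - b n • x n from
    funext fun n => sub_smul _ _ _]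
  exact h.tsum_eq

lemma aux_tsum_add (x : ℕ → X) {a b : ℕ → ℝ}
    (sa : Summable fun n => a n • x n) (sb : Summable fun n => b n • x n) :
    ∑' n, (a n + b n) • x n = ∑' n, a n • x n + ∑' n, b n • x n := by
  have h := sa.hasSum.add sb.hasSum
  rw [show (fun n => (a n + b n) • x n) = fun n => a n • x n + b n • x n from
    funext fun n => add_smul _ _ _]
  exact h.tsum_eq

lemma aux_tsum_smul (x : ℕ → X) (c : ℝ) {a : ℕ → ℝ}
    (sa : Summable fun n => a n • x n) :
    ∑' n, (c * a n) • x n = c • ∑' n, a n • x n := by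
  have h := sa.hasSum.const_smul c
  rw [show (fun n => (c * a n) • x n) = fun n => c • (a n • x n) from
    funext fun n => mul_smul _ _ _]
  exact h.tsum_eq

lemma aux_inj {A : ℝ} (hA : 0 < A) (x : ℕ → X)
    (hlow : ∀ (n : ℕ) (a : ℕ → ℝ) (j : ℕ), j < n →
      A * |a j| ≤ ‖∑ i ∈ Finset.range n, a i • x i‖)
    {a b : ℕ → ℝ}
    (sa : Summable fun n => a n • x n) (sb : Summable fun n => b n • x n)
    (h : ∑' n, a n • x n = ∑' n, b n • x n) : a = b := by
  funext j
  have hsub : Summable fun n => (a n - b n) • x n := by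
    simpa [sub_smul] using sa.sub sb
  have h1 := aux_tsum_lower x hlow hsub j
  rw [aux_tsum_sub x sa sb, h, sub_self, norm_zero] at h1
  have h2 : A * |a j - b j| ≤ A * 0 := by simpa using h1
  have h3 := le_of_mul_le_mul_left h2 hA
  exact sub_eq_zero.mp (abs_eq_zero.mp (le_antisymm h3 (abs_nonneg _)))

end Aux

/-- Theorem 3.3: If a Banach space contains a c₀-sequence
`(x_n)` with the `(N_k1)` property, then it fails the fixed point property for
affine nonexpansive mappings, witnessed explicitly by the set
`K = {∑ t_n x_n : t_n ∈ [0,1], (t_n) ∈ c₀}` and the map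
`T(∑ t_n x_n) = ∑_{n ≥ k} (α_n t_n + (1 - α_n)) x_n`. -/
theorem Nk1_fails_FPP_affine
    {X : Type*} [NormedAddCommGroup X] [NormedSpace ℝ X] [CompleteSpace X]
    (x : ℕ → X) (A B : ℝ) (hA : 0 < A) (hB : 0 < B)
    -- `(x_n)` is equivalent to the unit vector basis of c₀
    (hlow : ∀ (n : ℕ) (a : ℕ → ℝ) (j : ℕ), j < n →
      A * |a j| ≤ ‖∑ i ∈ Finset.range n, a i • x i‖)
    (hupp : ∀ (n : ℕ) (a : ℕ → ℝ),
      ‖∑ i ∈ Finset.range n, a i • x i‖ ≤ B * ⨆ i ∈ Finset.range n, |a i|)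
    -- the `(N_k1)` property
    (k : ℕ) (α : ℕ → ℝ) (hα : ∀ n, 0 ≤ α n ∧ α n < 1)
    (hαlim : Tendsto α atTop (𝓝 1))
    (hNk1 : ∀ a : ℕ → ℝ, Tendsto a atTop (𝓝 0) →
      ‖∑' n, (if k ≤ n then α n * a n else 0) • x n‖ ≤ ‖∑' n, a n • x n‖) :
    let K : Set X := {y | ∃ t : ℕ → ℝ, (∀ n, t n ∈ Set.Icc (0 : ℝ) 1) ∧
      Tendsto t atTop (𝓝 0) ∧ y = ∑' n, t n • x n}
    ∃ T : X → X,
      K.Nonempty ∧ IsClosed K ∧ Bornology.IsBounded K ∧ Convex ℝ K ∧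
      Set.MapsTo T K K ∧
      -- explicit formula for T on K
      (∀ t : ℕ → ℝ, (∀ n, t n ∈ Set.Icc (0 : ℝ) 1) → Tendsto t atTop (𝓝 0) →
        T (∑' n, t n • x n) =
          ∑' n, (if k ≤ n then α n * t n + (1 - α n) else 0) • x n) ∧
      -- nonexpansive
      (∀ y ∈ K, ∀ z ∈ K, ‖T y - T z‖ ≤ ‖y - z‖) ∧
      -- affine
      (∀ y ∈ K, ∀ z ∈ K, ∀ l : ℝ, l ∈ Set.Icc (0 : ℝ) 1 →
        T (l • y + (1 - l) • z) = l • T y + (1 - l) • T z) ∧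
      -- fixed point free
      (∀ y ∈ K, T y ≠ y) := by
  classical
  intro K
  -- summability of coefficient sums
  have hsum : ∀ (a : ℕ → ℝ), Tendsto a atTop (𝓝 0) → Summable fun n => a n • x n :=
    fun a ha => aux_summable hB x hupp ha
  -- coefficient extraction function
  set c : X → ℕ → ℝ := fun y =>
    if h : ∃ t : ℕ → ℝ, (∀ n, t n ∈ Set.Icc (0:ℝ) 1) ∧ Tendsto t atTop (𝓝 0) ∧
        y = ∑' n, t n • x n
    then h.choose else fun _ => 0 with hcdef
  have hc : ∀ t : ℕ → ℝ, (∀ n, t n ∈ Set.Icc (0:ℝ) 1) → Tendsto t atTop (𝓝 0) →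
      c (∑' n, t n • x n) = t := by
    intro t ht1 ht2
    have hex : ∃ s : ℕ → ℝ, (∀ n, s n ∈ Set.Icc (0:ℝ) 1) ∧ Tendsto s atTop (𝓝 0) ∧
        (∑' n, t n • x n) = ∑' n, s n • x n := ⟨t, ht1, ht2, rfl⟩
    rw [hcdef]
    simp only [dif_pos hex]
    obtain ⟨hs1, hs2, hs3⟩ := hex.choose_spec
    exact aux_inj hA x hlow (hsum _ hs2) (hsum _ ht2) hs3.symm
  -- the map T
  set T : X → X := fun y =>
    ∑' n, (if k ≤ n then α n * c y n + (1 - α n) else 0) • x n with hTdef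
  -- the formula for T on K
  have hT : ∀ t : ℕ → ℝ, (∀ n, t n ∈ Set.Icc (0:ℝ) 1) → Tendsto t atTop (𝓝 0) →
      T (∑' n, t n • x n) =
        ∑' n, (if k ≤ n then α n * t n + (1 - α n) else 0) • x n := by
    intro t ht1 ht2
    rw [hTdef]
    simp only [hc t ht1 ht2]
  -- transformed coefficients stay in [0,1]
  have hσmem : ∀ t : ℕ → ℝ, (∀ n, t n ∈ Set.Icc (0:ℝ) 1) →
      ∀ n, (if k ≤ n then α n * t n + (1 - α n) else 0) ∈ Set.Icc (0:ℝ) 1 := by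
    intro t ht n
    obtain ⟨ht0, ht1⟩ := ht n
    obtain ⟨ha0, ha1⟩ := hα n
    by_cases hkn : k ≤ n
    · simp only [if_pos hkn, Set.mem_Icc]
      constructor
      · nlinarith
      · nlinarith
    · simp [hkn]
  -- transformed coefficients tend to 0
  have hσ0 : ∀ t : ℕ → ℝ, Tendsto t atTop (𝓝 0) →
      Tendsto (fun n => if k ≤ n then α n * t n + (1 - α n) else 0) atTop (𝓝 0) := by
    intro t ht
    have h1 : Tendsto (fun n => α n * t n + (1 - α n)) atTop (𝓝 0) := by
      have := (hαlim.mul ht).add ((tendsto_const_nhds : Tendsto (fun _ : ℕ => (1:ℝ)) atTop (𝓝 1)).sub hαlim)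
      simpa using this
    refine Tendsto.congr' ?_ h1
    filter_upwards [eventually_ge_atTop k] with n hn
    simp [hn]
  -- convex combination of coefficient sums
  have hcombo : ∀ (l1 l2 : ℝ) (a b : ℕ → ℝ), Tendsto a atTop (𝓝 0) →
      Tendsto b atTop (𝓝 0) →
      ∑' n, (l1 * a n + l2 * b n) • x n =
        l1 • ∑' n, a n • x n + l2 • ∑' n, b n • x n := by
    intro l1 l2 a b ha hb
    have ha' : Tendsto (fun n => l1 * a n) atTop (𝓝 0) := by
      simpa using ha.const_mul l1
    have hb' : Tendsto (fun n => l2 * b n) atTop (𝓝 0) := by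
      simpa using hb.const_mul l2
    rw [aux_tsum_add x (hsum _ ha') (hsum _ hb'), aux_tsum_smul x l1 (hsum a ha),
      aux_tsum_smul x l2 (hsum b hb)]
  refine ⟨T, ?_, ?_, ?_, ?_, ?_, hT, ?_, ?_, ?_⟩
  -- nonempty
  · exact ⟨0, fun _ => 0, fun n => by simp, tendsto_const_nhds, by simp⟩
  -- closed
  · apply IsSeqClosed.isClosed
    intro y p hy hyp
    have hy' : ∀ m, ∃ t : ℕ → ℝ, (∀ n, t n ∈ Set.Icc (0:ℝ) 1) ∧
        Tendsto t atTop (𝓝 0) ∧ y m = ∑' n, t n • x n := fun m => hy m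
    choose t ht1 ht2 ht3 using hy'
    have hsm : ∀ m, Summable fun n => t m n • x n := fun m => hsum _ (ht2 m)
    have hest : ∀ m l j, A * |t m j - t l j| ≤ ‖y m - y l‖ := by
      intro m l j
      have hsml : Summable fun n => (t m n - t l n) • x n := by
        simpa [sub_smul] using (hsm m).sub (hsm l)
      have h1 := aux_tsum_lower x hlow hsml j
      rwa [aux_tsum_sub x (hsm m) (hsm l), ← ht3 m, ← ht3 l] at h1
    have hco : ∀ j, ∃ L, Tendsto (fun m => t m j) atTop (𝓝 L) := by
      intro j
      apply cauchySeq_tendsto_of_complete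
      rw [Metric.cauchySeq_iff]
      intro ε hε
      rcases Metric.cauchySeq_iff.mp hyp.cauchySeq (A * ε) (by positivity) with ⟨N, hN⟩
      refine ⟨N, fun m hm l hl => ?_⟩
      have h1 := hest m l j
      have h2 := hN m hm l hl
      rw [dist_eq_norm] at h2
      rw [Real.dist_eq]
      nlinarith [abs_nonneg (t m j - t l j)]
    choose τ hτ using hco
    have hest2 : ∀ m j, A * |t m j - τ j| ≤ ‖y m - p‖ := by
      intro m j
      have hl1 : Tendsto (fun l => A * |t m j - t l j|) atTop (𝓝 (A * |t m j - τ j|)) :=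
        (((hτ j).const_sub (t m j)).abs.const_mul A)
      have hl2 : Tendsto (fun l => ‖y m - y l‖) atTop (𝓝 ‖y m - p‖) :=
        (hyp.const_sub (y m)).norm
      exact le_of_tendsto_of_tendsto' hl1 hl2 fun l => hest m l j
    have hτmem : ∀ j, τ j ∈ Set.Icc (0:ℝ) 1 := by
      intro j
      constructor
      · exact ge_of_tendsto (hτ j) (Filter.Eventually.of_forall fun m => (ht1 m j).1)
      · exact le_of_tendsto (hτ j) (Filter.Eventually.of_forall fun m => (ht1 m j).2)
    have hτ0 : Tendsto τ atTop (𝓝 0) := by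
      rw [Metric.tendsto_atTop]
      intro ε hε
      rcases Metric.tendsto_atTop.mp hyp (A * ε / 2) (by positivity) with ⟨m, hm⟩
      have hm' : ‖y m - p‖ < A * ε / 2 := by
        have := hm m le_rfl; rwa [dist_eq_norm] at this
      rcases Metric.tendsto_atTop.mp (ht2 m) (ε / 2) (by positivity) with ⟨N, hN⟩
      refine ⟨N, fun j hj => ?_⟩
      have h1 := hest2 m j
      have h2 := hN j hj
      rw [Real.dist_eq, sub_zero] at h2 ⊢
      have h4 : |t m j - τ j| < ε / 2 := lt_of_mul_lt_mul_left (by linarith) hA.le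
      have h5 : |τ j| - |t m j| ≤ |τ j - t m j| := abs_sub_abs_le_abs_sub _ _
      rw [abs_sub_comm] at h5
      linarith
    have hsτ : Summable fun n => τ n • x n := hsum τ hτ0
    have hle : ∀ m, ‖y m - ∑' n, τ n • x n‖ ≤ B * (‖y m - p‖ / A) := by
      intro m
      have hsml : Summable fun n => (t m n - τ n) • x n := by
        simpa [sub_smul] using (hsm m).sub hsτ
      have h1 := aux_tsum_le hB.le x hupp (M := ‖y m - p‖ / A) (by positivity) hsml
        (fun j => by
          rw [le_div_iff₀ hA, mul_comm]
          exact hest2 m j)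
      rwa [aux_tsum_sub x (hsm m) hsτ, ← ht3 m] at h1
    have hz0 : Tendsto (fun m => y m - ∑' n, τ n • x n) atTop (𝓝 0) := by
      apply squeeze_zero_norm hle
      have h1 : Tendsto (fun m => ‖y m - p‖) atTop (𝓝 0) := by
        have := (hyp.sub_const p).norm
        simpa using this
      have := (h1.div_const A).const_mul B
      simpa using this
    have hyz : Tendsto y atTop (𝓝 (∑' n, τ n • x n)) := by
      have := hz0.add_const (∑' n, τ n • x n)
      simpa using this
    exact ⟨τ, hτmem, hτ0, tendsto_nhds_unique hyp hyz⟩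
  -- bounded
  · refine (Metric.isBounded_closedBall (x := (0:X)) (r := B)).subset ?_
    rintro y ⟨t, ht1, ht2, rfl⟩
    rw [Metric.mem_closedBall, dist_zero_right]
    have := aux_tsum_le hB.le x hupp zero_le_one (hsum t ht2)
      (fun n => abs_le.mpr ⟨by linarith [(ht1 n).1], (ht1 n).2⟩)
    simpa using this
  -- convex
  · rintro y ⟨t, ht1, ht2, rfl⟩ z ⟨u, hu1, hu2, rfl⟩ a b ha hb hab
    refine ⟨fun n => a * t n + b * u n, fun n => ?_, ?_, ?_⟩
    · obtain ⟨h1, h2⟩ := ht1 n; obtain ⟨h3, h4⟩ := hu1 n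
      refine ⟨?_, ?_⟩
      · show (0:ℝ) ≤ a * t n + b * u n
        positivity
      · show a * t n + b * u n ≤ 1
        nlinarith
    · have := (ht2.const_mul a).add (hu2.const_mul b)
      simpa using this
    · exact (hcombo a b t u ht2 hu2).symm
  -- maps to
  · rintro y ⟨t, ht1, ht2, rfl⟩
    rw [hT t ht1 ht2]
    exact ⟨_, hσmem t ht1, hσ0 t ht2, rfl⟩
  -- nonexpansive
  · rintro y ⟨t, ht1, ht2, rfl⟩ z ⟨u, hu1, hu2, rfl⟩
    rw [hT t ht1 ht2, hT u hu1 hu2]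
    have hsub0 : Tendsto (fun n => t n - u n) atTop (𝓝 0) := by
      simpa using ht2.sub hu2
    have h1 := hNk1 (fun n => t n - u n) hsub0
    have e1 : (fun n : ℕ => (if k ≤ n then α n * (t n - u n) else 0) • x n) =
        fun n => ((if k ≤ n then α n * t n + (1 - α n) else 0) -
          (if k ≤ n then α n * u n + (1 - α n) else 0)) • x n := by
      funext n
      by_cases hkn : k ≤ n <;> simp [hkn] <;> ring_nf
    rw [show (fun n : ℕ => (if k ≤ n then α n * (t n - u n) else 0) • x n) =
        fun n => (if k ≤ n then α n * (t n - u n) else 0) • x n from rfl] at h1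
    calc ‖(∑' n, (if k ≤ n then α n * t n + (1 - α n) else 0) • x n) -
          ∑' n, (if k ≤ n then α n * u n + (1 - α n) else 0) • x n‖
        = ‖∑' n, (if k ≤ n then α n * (t n - u n) else 0) • x n‖ := by
          rw [← aux_tsum_sub x (hsum _ (hσ0 t ht2)) (hsum _ (hσ0 u hu2))]
          congr 1
          apply tsum_congr
          intro n
          by_cases hkn : k ≤ n <;> simp [hkn] <;> ring_nf
      _ ≤ ‖∑' n, (t n - u n) • x n‖ := h1
      _ = ‖(∑' n, t n • x n) - ∑' n, u n • x n‖ := by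
          rw [aux_tsum_sub x (hsum t ht2) (hsum u hu2)]
  -- affine
  · rintro y ⟨t, ht1, ht2, rfl⟩ z ⟨u, hu1, hu2, rfl⟩ l ⟨hl0, hl1⟩
    have hw1 : ∀ n, l * t n + (1 - l) * u n ∈ Set.Icc (0:ℝ) 1 := by
      intro n
      obtain ⟨h1, h2⟩ := ht1 n; obtain ⟨h3, h4⟩ := hu1 n
      constructor
      · have : (0:ℝ) ≤ 1 - l := by linarith
        positivity
      · nlinarith
    have hw2 : Tendsto (fun n => l * t n + (1 - l) * u n) atTop (𝓝 0) := by
      have := (ht2.const_mul l).add (hu2.const_mul (1 - l))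
      simpa using this
    have hcy : l • (∑' n, t n • x n) + (1 - l) • (∑' n, u n • x n) =
        ∑' n, (l * t n + (1 - l) * u n) • x n := (hcombo l (1 - l) t u ht2 hu2).symm
    rw [hcy, hT _ hw1 hw2, hT t ht1 ht2, hT u hu1 hu2]
    rw [show (fun n : ℕ => (if k ≤ n then α n * (l * t n + (1 - l) * u n) + (1 - α n)
          else 0) • x n) =
        fun n => (l * (if k ≤ n then α n * t n + (1 - α n) else 0) +
          (1 - l) * (if k ≤ n then α n * u n + (1 - α n) else 0)) • x n from
      funext fun n => by by_cases hkn : k ≤ n <;> simp [hkn] <;> ring_nf]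
    exact hcombo l (1 - l) _ _ (hσ0 t ht2) (hσ0 u hu2)
  -- fixed point free
  · rintro y ⟨t, ht1, ht2, rfl⟩ hfix
    rw [hT t ht1 ht2] at hfix
    have heq : (fun n => if k ≤ n then α n * t n + (1 - α n) else 0) = t :=
      aux_inj hA x hlow (hsum _ (hσ0 t ht2)) (hsum t ht2) hfix
    rcases Metric.tendsto_atTop.mp ht2 (1/2) (by norm_num) with ⟨N, hN⟩
    set n := max N k with hn
    have hkn : k ≤ n := le_max_right _ _
    have h1 := congrFun heq n
    rw [if_pos hkn] at h1
    have h2 := hN n (le_max_left _ _)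
    rw [Real.dist_eq, sub_zero] at h2
    have h3 : t n < 1 := lt_of_le_of_lt (le_abs_self _) (by linarith)
    obtain ⟨ha0, ha1⟩ := hα n
    nlinarith
end

section
/- Every semi-normalized weakly null basic sequence (x_n) in a Banach space that is 1-spreading (1-equivalent to all of its subsequences) is 1-suppression unconditional. -/
open Finset Filter Topology

/-- Mazur-type lemma: a weakly null sequence admits convex combinations of
arbitrarily late terms with arbitrarily small norm. -/
lemma mazur_aux {X : Type*} [NormedAddCommGroup X] [NormedSpace ℝ X]
    (x : ℕ → X)
    (hweak : ∀ f : X →L[ℝ] ℝ, Tendsto (fun n => f (x n)) atTop (𝓝 0))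
    (j : ℕ) {ε : ℝ} (hε : 0 < ε) :
    ∃ (ι : Type) (t : Finset ι) (w : ι → ℝ) (m : ι → ℕ),
      (∀ i ∈ t, 0 ≤ w i) ∧ (∑ i ∈ t, w i) = 1 ∧ (∀ i ∈ t, j ≤ m i) ∧
      ‖∑ i ∈ t, w i • x (m i)‖ < ε := by
  have h0 : (0 : X) ∈ closure (convexHull ℝ (x '' {m | j ≤ m})) := by
    by_contra h
    obtain ⟨f, u, hfu, hub⟩ := geometric_hahn_banach_point_closed
      ((convex_convexHull ℝ _).closure) isClosed_closure h
    simp only [map_zero] at hfu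
    have hxm : ∀ m, j ≤ m → u < f (x m) := fun m hm =>
      hub _ (subset_closure (subset_convexHull ℝ _ ⟨m, hm, rfl⟩))
    have hlt : ∀ᶠ m in atTop, f (x m) < u := (hweak f).eventually_lt_const hfu
    obtain ⟨m, hm1, hm2⟩ := (hlt.and (eventually_ge_atTop j)).exists
    exact absurd (hxm m hm2) (not_lt.2 hm1.le)
  rw [Metric.mem_closure_iff] at h0
  obtain ⟨y, hy, hyd⟩ := h0 ε hε
  rw [_root_.convexHull_eq] at hy
  obtain ⟨ι, t, w, z, hw0, hw1, hzs, hzc⟩ := hy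
  classical
  have hm : ∀ i, ∃ k, i ∈ t → (j ≤ k ∧ x k = z i) := by
    intro i
    by_cases hi : i ∈ t
    · obtain ⟨k, hk, hxk⟩ := hzs i hi
      exact ⟨k, fun _ => ⟨hk, hxk⟩⟩
    · exact ⟨j, fun h => absurd h hi⟩
  choose m hmspec using hm
  refine ⟨ι, t, w, m, hw0, hw1, fun i hi => (hmspec i hi).1, ?_⟩
  have : ∑ i ∈ t, w i • x (m i) = y := by
    rw [← hzc, Finset.centerMass_eq_of_sum_1 _ _ hw1]
    exact Finset.sum_congr rfl fun i hi => by rw [(hmspec i hi).2]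
  rw [this]
  calc ‖y‖ = dist 0 y := by rw [dist_zero_left]
  _ < ε := hyd

/-- Zeroing a single coordinate does not increase the norm. -/
lemma zero_one_coord {X : Type*} [NormedAddCommGroup X] [NormedSpace ℝ X]
    (x : ℕ → X)
    (hweak : ∀ f : X →L[ℝ] ℝ, Tendsto (fun n => f (x n)) atTop (𝓝 0))
    (hspr : ∀ φ : ℕ → ℕ, StrictMono φ → ∀ (n : ℕ) (a : ℕ → ℝ),
      ‖∑ i ∈ Finset.range n, a i • x (φ i)‖ = ‖∑ i ∈ Finset.range n, a i • x i‖)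
    (n j : ℕ) (a : ℕ → ℝ) :
    ‖∑ i ∈ Finset.range n, (if i = j then 0 else a i) • x i‖ ≤
      ‖∑ i ∈ Finset.range n, a i • x i‖ := by
  classical
  by_cases hjn : j < n
  swap
  · refine le_of_eq ?_
    congr 1
    refine Finset.sum_congr rfl fun i hi => ?_
    have hij : i ≠ j := by have := Finset.mem_range.1 hi; omega
    rw [if_neg hij]
  · set S := ‖∑ i ∈ Finset.range n, a i • x i‖ with hS
    set a' : ℕ → ℝ := fun i => if i = j then 0 else a i with ha'
    refine le_of_forall_pos_le_add ?_
    intro ε hε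
    have hε' : 0 < ε / (|a j| + 1) := by positivity
    obtain ⟨ι, t, w, m, hw0, hw1, hjm, hy⟩ := mazur_aux x hweak j hε'
    set D := t.sup m + 1 with hD
    set ψ : ℕ → ℕ := fun i => if i < j then i else i + D with hψdef
    have hψ : StrictMono ψ := by
      intro p q hpq
      simp only [hψdef]
      split <;> split <;> omega
    set z := ∑ i ∈ Finset.range n, a' i • x (ψ i) with hz
    have hznorm : ‖z‖ = ‖∑ i ∈ Finset.range n, a' i • x i‖ := hspr ψ hψ n a'
    -- key: for each i0 ∈ t, ‖z + a j • x (m i0)‖ = S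
    have hkey : ∀ i0 ∈ t, ‖z + a j • x (m i0)‖ = S := by
      intro i0 hi0
      set φ : ℕ → ℕ := fun i => if i < j then i else if i = j then m i0 else i + D with hφdef
      have hmle : m i0 ≤ t.sup m := Finset.le_sup hi0
      have hmj : j ≤ m i0 := hjm i0 hi0
      have hφ : StrictMono φ := by
        intro p q hpq
        simp only [hφdef]
        split <;> split <;> first | omega | (split <;> omega) |
          (split
           · omega
           · split <;> omega)
      have hsum : ∑ i ∈ Finset.range n, a i • x (φ i)
          = z + a j • x (m i0) := by
        have step : ∀ i ∈ Finset.range n, a i • x (φ i)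
            = a' i • x (ψ i) + (if i = j then a j • x (m i0) else 0) := by
          intro i _
          by_cases hij : i = j
          · subst hij
            simp [hφdef, ha']
          · have hfe : φ i = ψ i := by
              simp only [hφdef, hψdef]
              by_cases h : i < j <;> simp [h, hij]
            rw [hfe]
            simp [ha', hij]
        rw [Finset.sum_congr rfl step, Finset.sum_add_distrib, ← hz,
          Finset.sum_ite_eq' (Finset.range n) j (fun _ => a j • x (m i0)),
          if_pos (Finset.mem_range.2 hjn)]
      rw [← hsum]
      exact hspr φ hφ n a
    set y := ∑ i ∈ t, w i • x (m i) with hydef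
    have hconv : z + a j • y = ∑ i ∈ t, w i • (z + a j • x (m i)) := by
      simp only [smul_add]
      rw [Finset.sum_add_distrib, ← Finset.sum_smul, hw1, one_smul]
      congr 1
      rw [hydef, Finset.smul_sum]
      exact Finset.sum_congr rfl fun i _ => (smul_comm _ _ _)
    have hnorm1 : ‖z + a j • y‖ ≤ S := by
      rw [hconv]
      calc ‖∑ i ∈ t, w i • (z + a j • x (m i))‖
          ≤ ∑ i ∈ t, ‖w i • (z + a j • x (m i))‖ := norm_sum_le _ _
        _ = ∑ i ∈ t, w i * S := by
            refine Finset.sum_congr rfl fun i hi => ?_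
            rw [norm_smul, Real.norm_eq_abs, abs_of_nonneg (hw0 i hi), hkey i hi]
        _ = S := by rw [← Finset.sum_mul, hw1, one_mul]
    have hz_le : ‖z‖ ≤ S + ε := by
      have h1 : ‖z‖ ≤ ‖z + a j • y‖ + ‖a j • y‖ := by
        calc ‖z‖ = ‖(z + a j • y) - a j • y‖ := by rw [add_sub_cancel_right]
        _ ≤ _ := norm_sub_le _ _
      have h2 : ‖a j • y‖ ≤ ε := by
        rw [norm_smul, Real.norm_eq_abs]
        calc |a j| * ‖y‖ ≤ |a j| * (ε / (|a j| + 1)) :=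
              mul_le_mul_of_nonneg_left hy.le (abs_nonneg _)
          _ ≤ (|a j| + 1) * (ε / (|a j| + 1)) := by
              apply mul_le_mul_of_nonneg_right (by linarith) hε'.le
          _ = ε := by field_simp
      linarith
    rw [← hznorm]
    exact hz_le

/-- Every semi-normalized weakly null basic sequence that is
`1`-spreading is `1`-suppression unconditional. -/
theorem oneSpreading_weaklyNull_suppressionUnconditional
    {X : Type*} [NormedAddCommGroup X] [NormedSpace ℝ X] [CompleteSpace X]
    (x : ℕ → X)
    -- basic sequence
    (hbasic : ∃ K : ℝ, ∀ (m n : ℕ) (a : ℕ → ℝ), m ≤ n →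
      ‖∑ i ∈ Finset.range m, a i • x i‖ ≤ K * ‖∑ i ∈ Finset.range n, a i • x i‖)
    -- semi-normalized
    (hsemi : ∃ c C : ℝ, 0 < c ∧ ∀ n, c ≤ ‖x n‖ ∧ ‖x n‖ ≤ C)
    -- weakly null
    (hweak : ∀ f : X →L[ℝ] ℝ, Tendsto (fun n => f (x n)) atTop (𝓝 0))
    -- 1-spreading
    (hspr : ∀ φ : ℕ → ℕ, StrictMono φ → ∀ (n : ℕ) (a : ℕ → ℝ),
      ‖∑ i ∈ Finset.range n, a i • x (φ i)‖ = ‖∑ i ∈ Finset.range n, a i • x i‖) :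
    -- 1-suppression unconditional
    ∀ (n : ℕ) (a : ℕ → ℝ) (F : Finset ℕ), F ⊆ Finset.range n →
      ‖∑ i ∈ F, a i • x i‖ ≤ ‖∑ i ∈ Finset.range n, a i • x i‖ := by
  classical
  intro n a F hF
  -- first, the zeroing version over any finset G of removed coordinates
  have main : ∀ (G : Finset ℕ) (b : ℕ → ℝ),
      ‖∑ i ∈ Finset.range n, (if i ∈ G then 0 else b i) • x i‖ ≤
        ‖∑ i ∈ Finset.range n, b i • x i‖ := by
    intro G
    induction G using Finset.induction_on with
    | empty => intro b; simp
    | @insert j G hj ih =>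
      intro b
      set b₁ : ℕ → ℝ := fun i => if i = j then 0 else b i with hb₁
      have h1 : ‖∑ i ∈ Finset.range n, b₁ i • x i‖ ≤ ‖∑ i ∈ Finset.range n, b i • x i‖ :=
        zero_one_coord x hweak hspr n j b
      have h2 := ih b₁
      have hagree : ∀ i, (if i ∈ insert j G then (0:ℝ) else b i)
          = (if i ∈ G then 0 else b₁ i) := by
        intro i
        by_cases hij : i = j
        · subst hij
          simp [hj, hb₁]
        · by_cases hiG : i ∈ G <;> simp [hiG, hij, hb₁]
      calc ‖∑ i ∈ Finset.range n, (if i ∈ insert j G then (0:ℝ) else b i) • x i‖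
          = ‖∑ i ∈ Finset.range n, (if i ∈ G then 0 else b₁ i) • x i‖ := by
            simp_rw [hagree]
        _ ≤ ‖∑ i ∈ Finset.range n, b₁ i • x i‖ := h2
        _ ≤ _ := h1
  have hFeq : ∑ i ∈ Finset.range n, (if i ∈ Finset.range n \ F then (0:ℝ) else a i) • x i
      = ∑ i ∈ F, a i • x i := by
    rw [← Finset.sum_subset hF (fun i hi hiF => by simp [Finset.mem_sdiff, hi, hiF])]
    exact Finset.sum_congr rfl fun i hi => by simp [Finset.mem_sdiff, hi]
  rw [← hFeq]
  exact main _ a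
end

section
/- Let X be a Banach space with a 1-unconditional Schauder basis, and suppose no subspace of X is isomorphic to ℓ₁. If every nonempty closed bounded convex subset of X has the fixed point property for affine nonexpansive mappings, then X is reflexive. -/
open Finset Filter Topology

section prelim
variable {X : Type*} [NormedAddCommGroup X] [NormedSpace ℝ X]

/-- one-coordinate damping -/
lemma step_mono (e : ℕ → X)
    (hunc : ∀ (n : ℕ) (c ε : ℕ → ℝ), (∀ i, ε i = 1 ∨ ε i = -1) →
      ‖∑ i ∈ Finset.range n, (ε i * c i) • e i‖ ≤ ‖∑ i ∈ Finset.range n, c i • e i‖)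
    (N : ℕ) (c : ℕ → ℝ) (j : ℕ) (θ : ℝ) (hθ : |θ| ≤ 1) :
    ‖∑ i ∈ Finset.range N, (if i = j then θ * c i else c i) • e i‖
      ≤ ‖∑ i ∈ Finset.range N, c i • e i‖ := by
  set ε : ℕ → ℝ := fun i => if i = j then (-1 : ℝ) else 1 with hε
  have hεe : ∀ i, ε i = 1 ∨ ε i = -1 := by
    intro i; by_cases h : i = j <;> simp [hε, h]
  have h1 : ‖∑ i ∈ Finset.range N, (ε i * c i) • e i‖ ≤ ‖∑ i ∈ Finset.range N, c i • e i‖ :=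
    hunc N c ε hεe
  have hid : ∑ i ∈ Finset.range N, (if i = j then θ * c i else c i) • e i
      = ((1 + θ)/2) • (∑ i ∈ Finset.range N, c i • e i)
        + ((1 - θ)/2) • (∑ i ∈ Finset.range N, (ε i * c i) • e i) := by
    rw [Finset.smul_sum, Finset.smul_sum, ← Finset.sum_add_distrib]
    refine Finset.sum_congr rfl fun i _ => ?_
    by_cases h : i = j <;>
      simp only [hε, h, if_true, if_false, smul_smul] <;>
      rw [← add_smul] <;> congr 1 <;> ring
  have habs := abs_le.mp hθ
  calc ‖∑ i ∈ Finset.range N, (if i = j then θ * c i else c i) • e i‖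
      ≤ ((1 + θ)/2) * ‖∑ i ∈ Finset.range N, c i • e i‖
        + ((1 - θ)/2) * ‖∑ i ∈ Finset.range N, (ε i * c i) • e i‖ := by
        rw [hid]
        refine (norm_add_le _ _).trans ?_
        rw [norm_smul, norm_smul, Real.norm_eq_abs, Real.norm_eq_abs,
          abs_of_nonneg (by linarith), abs_of_nonneg (by linarith)]
    _ ≤ ((1 + θ)/2) * ‖∑ i ∈ Finset.range N, c i • e i‖
        + ((1 - θ)/2) * ‖∑ i ∈ Finset.range N, c i • e i‖ := by
        have : (0:ℝ) ≤ (1 - θ)/2 := by linarith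
        nlinarith [h1]
    _ = ‖∑ i ∈ Finset.range N, c i • e i‖ := by ring

/-- coefficientwise domination -/
lemma norm_mono (e : ℕ → X)
    (hunc : ∀ (n : ℕ) (c ε : ℕ → ℝ), (∀ i, ε i = 1 ∨ ε i = -1) →
      ‖∑ i ∈ Finset.range n, (ε i * c i) • e i‖ ≤ ‖∑ i ∈ Finset.range n, c i • e i‖)
    (N : ℕ) (a b : ℕ → ℝ) (hab : ∀ i, |a i| ≤ |b i|) :
    ‖∑ i ∈ Finset.range N, a i • e i‖ ≤ ‖∑ i ∈ Finset.range N, b i • e i‖ := by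
  set c : ℕ → ℕ → ℝ := fun m i => if i < m then a i else b i with hc
  have key : ∀ m, ‖∑ i ∈ Finset.range N, c m i • e i‖ ≤ ‖∑ i ∈ Finset.range N, b i • e i‖ := by
    intro m
    induction m with
    | zero => simp [hc]
    | succ m ih =>
      set θ : ℝ := if b m = 0 then 0 else a m / b m with hθdef
      have hθ : |θ| ≤ 1 := by
        by_cases h : b m = 0
        · simp [hθdef, h]
        · rw [hθdef, if_neg h, abs_div]
          rw [div_le_one (by positivity)]
          exact hab m
      have heq : ∀ i, c (m+1) i = if i = m then θ * c m i else c m i := by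
        intro i
        by_cases h : i = m
        · subst h
          have h1 : ¬ (i < i) := lt_irrefl i
          simp only [hc, Nat.lt_succ_iff, le_refl, if_true, h1, if_false, if_pos rfl]
          by_cases hb : b i = 0
          · have : a i = 0 := by
              have := hab i; rw [hb, abs_zero] at this
              exact abs_nonpos_iff.mp this
            simp [hθdef, hb, this]
          · rw [hθdef, if_neg hb, div_mul_cancel₀ _ hb]
        · have : i < m + 1 ↔ i < m := by omega
          simp only [hc, this, if_neg h]
      calc ‖∑ i ∈ Finset.range N, c (m+1) i • e i‖
          = ‖∑ i ∈ Finset.range N, (if i = m then θ * c m i else c m i) • e i‖ := by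
            congr 1; exact Finset.sum_congr rfl fun i _ => by rw [heq]
        _ ≤ ‖∑ i ∈ Finset.range N, c m i • e i‖ := step_mono e hunc N (c m) m θ hθ
        _ ≤ _ := ih
  have : ∑ i ∈ Finset.range N, a i • e i = ∑ i ∈ Finset.range N, c N i • e i := by
    refine Finset.sum_congr rfl fun i hi => ?_
    rw [Finset.mem_range] at hi
    simp [hc, hi]
  rw [this]; exact key N

end prelim

section blocks
variable {X : Type*} [NormedAddCommGroup X] [NormedSpace ℝ X]
variable (e : ℕ → X) (lo hi : ℕ → ℕ) (d : ℕ → ℕ → ℝ)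

/-- block vectors -/
noncomputable def blk (k : ℕ) : X := ∑ i ∈ Finset.Ico (lo k) (hi k), d k i • e i

/-- combined coefficient function -/
noncomputable def cf (t : ℕ → ℝ) (K : ℕ) : ℕ → ℝ := fun i =>
  ∑ k ∈ Finset.range K, if i ∈ Finset.Ico (lo k) (hi k) then t k * d k i else 0


lemma hi_le_lo (hsep : ∀ k, hi k ≤ lo (k+1)) (hwin : ∀ k, lo k ≤ hi k) : ∀ k k', k < k' → hi k ≤ lo k' := by
  intro k k' h
  induction k' with
  | zero => omega
  | succ m ih =>
    rcases Nat.lt_succ_iff_lt_or_eq.mp h with h' | h'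
    · exact le_trans (ih h') (le_trans (hwin m) (hsep m))
    · subst h'; exact hsep k

lemma win_disj (hsep : ∀ k, hi k ≤ lo (k+1)) (hwin : ∀ k, lo k ≤ hi k) {k k' i : ℕ} (h1 : i ∈ Finset.Ico (lo k) (hi k))
    (h2 : i ∈ Finset.Ico (lo k') (hi k')) : k = k' := by
  rw [Finset.mem_Ico] at h1 h2
  rcases lt_trichotomy k k' with h | h | h
  · have := hi_le_lo lo hi hsep hwin k k' h; omega
  · exact h
  · have := hi_le_lo lo hi hsep hwin k' k h; omega

lemma cf_eq_of_mem (hsep : ∀ k, hi k ≤ lo (k+1)) (hwin : ∀ k, lo k ≤ hi k) {t : ℕ → ℝ} {K k i : ℕ} (hk : k < K)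
    (hi' : i ∈ Finset.Ico (lo k) (hi k)) : cf lo hi d t K i = t k * d k i := by
  unfold cf
  rw [Finset.sum_eq_single_of_mem k (Finset.mem_range.mpr hk)]
  · rw [if_pos hi']
  · intro b _ hbk
    rw [if_neg]
    intro hmem
    exact hbk (win_disj lo hi hsep hwin hmem hi')

lemma cf_eq_zero {t : ℕ → ℝ} {K i : ℕ}
    (h : ∀ k, k < K → i ∉ Finset.Ico (lo k) (hi k)) : cf lo hi d t K i = 0 := by
  rw [cf]
  refine Finset.sum_eq_zero fun k hk => ?_
  rw [if_neg (h k (Finset.mem_range.mp hk))]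

lemma cf_identity (t : ℕ → ℝ) (K N : ℕ) (hN : ∀ k, k < K → hi k ≤ N) :
    ∑ i ∈ Finset.range N, cf lo hi d t K i • e i
      = ∑ k ∈ Finset.range K, t k • blk e lo hi d k := by
  unfold cf
  have : ∀ i ∈ Finset.range N,
      (∑ k ∈ Finset.range K, if i ∈ Finset.Ico (lo k) (hi k) then t k * d k i else 0) • e i
      = ∑ k ∈ Finset.range K, (if i ∈ Finset.Ico (lo k) (hi k) then (t k * d k i) • e i else 0) := by
    intro i _
    rw [Finset.sum_smul]
    exact Finset.sum_congr rfl fun k _ => by split_ifs <;> simp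
  rw [Finset.sum_congr rfl this, Finset.sum_comm]
  refine Finset.sum_congr rfl fun k hk => ?_
  rw [Finset.mem_range] at hk
  have hsub : Finset.Ico (lo k) (hi k) ⊆ Finset.range N := by
    intro i hi'
    rw [Finset.mem_Ico] at hi'; rw [Finset.mem_range]
    exact lt_of_lt_of_le hi'.2 (hN k hk)
  rw [Finset.sum_ite_mem, Finset.inter_comm, Finset.inter_eq_left.mpr hsub]
  rw [blk, Finset.smul_sum]
  exact Finset.sum_congr rfl fun i _ => by rw [smul_smul]

/-- abs comparison of combined coefficients -/
lemma cf_abs_le (hsep : ∀ k, hi k ≤ lo (k+1)) (hwin : ∀ k, lo k ≤ hi k) {t t' : ℕ → ℝ} (h : ∀ k, |t' k| ≤ |t k|) (K i : ℕ) :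
    |cf lo hi d t' K i| ≤ |cf lo hi d t K i| := by
  by_cases hex : ∃ k, k < K ∧ i ∈ Finset.Ico (lo k) (hi k)
  · obtain ⟨k, hk, hmem⟩ := hex
    rw [cf_eq_of_mem lo hi d hsep hwin hk hmem, cf_eq_of_mem lo hi d hsep hwin hk hmem,
      abs_mul, abs_mul]
    exact mul_le_mul_of_nonneg_right (h k) (abs_nonneg _)
  · push_neg at hex
    rw [cf_eq_zero lo hi d hex, cf_eq_zero lo hi d hex]

/-- norm comparison for block combinations -/
lemma blk_norm_mono (hsep : ∀ k, hi k ≤ lo (k+1)) (hwin : ∀ k, lo k ≤ hi k)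
    (hunc : ∀ (n : ℕ) (c ε : ℕ → ℝ), (∀ i, ε i = 1 ∨ ε i = -1) →
      ‖∑ i ∈ Finset.range n, (ε i * c i) • e i‖ ≤ ‖∑ i ∈ Finset.range n, c i • e i‖)
    (t t' : ℕ → ℝ) (h : ∀ k, |t' k| ≤ |t k|) (K : ℕ) :
    ‖∑ k ∈ Finset.range K, t' k • blk e lo hi d k‖
      ≤ ‖∑ k ∈ Finset.range K, t k • blk e lo hi d k‖ := by
  set N := (Finset.range K).sup hi with hN
  have hNle : ∀ k, k < K → hi k ≤ N :=
    fun k hk => Finset.le_sup (Finset.mem_range.mpr hk)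
  rw [← cf_identity e lo hi d t K N hNle, ← cf_identity e lo hi d t' K N hNle]
  exact norm_mono e hunc N _ _ (cf_abs_le lo hi d hsep hwin h K)

/-- indicator trick : sum over a finset as sum over a range -/
lemma sum_indicator_blk (t : ℕ → ℝ) (T : Finset ℕ) (K : ℕ) (hT : T ⊆ Finset.range K)
    (v : ℕ → X) :
    ∑ k ∈ T, t k • v k = ∑ k ∈ Finset.range K, (if k ∈ T then t k else 0) • v k := by
  have : ∀ k ∈ Finset.range K, (if k ∈ T then t k else 0) • v k
      = if k ∈ T then t k • v k else 0 := fun k _ => by split_ifs <;> simp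
  rw [Finset.sum_congr rfl this, Finset.sum_ite_mem, Finset.inter_eq_right.mpr hT]

end blocks

section construction
variable {X : Type*} [NormedAddCommGroup X] [NormedSpace ℝ X] [CompleteSpace X]

set_option maxHeartbeats 2000000 in
lemma no_bad_blocks
    (e : ℕ → X) (coef : ℕ → X →L[ℝ] ℝ)
    (hbi : ∀ i j, coef i (e j) = if i = j then (1 : ℝ) else 0)
    (hrepr : ∀ y : X,
      Tendsto (fun n => ∑ i ∈ Finset.range n, coef i y • e i) atTop (𝓝 y))
    (hunc : ∀ (n : ℕ) (c ε : ℕ → ℝ), (∀ i, ε i = 1 ∨ ε i = -1) →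
      ‖∑ i ∈ Finset.range n, (ε i * c i) • e i‖ ≤ ‖∑ i ∈ Finset.range n, c i • e i‖)
    (hfpp : ∀ K : Set X, K.Nonempty → IsClosed K → Bornology.IsBounded K →
      Convex ℝ K → ∀ T : X → X, Set.MapsTo T K K →
      (∀ y ∈ K, ∀ z ∈ K, ‖T y - T z‖ ≤ ‖y - z‖) →
      (∀ y ∈ K, ∀ z ∈ K, ∀ l : ℝ, l ∈ Set.Icc (0 : ℝ) 1 →
        T (l • y + (1 - l) • z) = l • T y + (1 - l) • T z) →
      ∃ y ∈ K, T y = y)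
    (lo hi : ℕ → ℕ) (d : ℕ → ℕ → ℝ)
    (hsep : ∀ k, hi k ≤ lo (k+1)) (hwin : ∀ k, lo k ≤ hi k)
    (δ B : ℝ) (hδ : 0 < δ)
    (hlow : ∀ k, δ ≤ ‖blk e lo hi d k‖)
    (hup : ∀ (t : ℕ → ℝ) (K : ℕ) (τ : ℝ), 0 ≤ τ → (∀ k, |t k| ≤ τ) →
      ‖∑ k ∈ Finset.range K, t k • blk e lo hi d k‖ ≤ τ * B) :
    False := by
  set u : ℕ → X := blk e lo hi d with hu
  -- the blocks are nonzero
  have hune : ∀ k, u k ≠ 0 := by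
    intro k h
    have := hlow k
    rw [hu, ← hu] at this
    rw [h, norm_zero] at this; linarith
  -- finset version of the upper bound
  have hupT : ∀ (t : ℕ → ℝ) (T : Finset ℕ) (τ : ℝ), 0 ≤ τ → (∀ k ∈ T, |t k| ≤ τ) →
      ‖∑ k ∈ T, t k • u k‖ ≤ τ * B := by
    intro t T τ hτ htle
    set K := (T.sup id) + 1 with hK
    have hT : T ⊆ Finset.range K := by
      intro k hk
      simp only [Finset.mem_range, hK]
      exact Nat.lt_succ_of_le (Finset.le_sup (f := id) hk)
    rw [sum_indicator_blk t T K hT]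
    refine hup _ K τ hτ fun k => ?_
    by_cases h : k ∈ T
    · rw [if_pos h]; exact htle k h
    · rw [if_neg h, abs_zero]; exact hτ
  -- norm bound for sums
  have hnormle : ∀ (r : ℕ → ℝ) (z : X) (τ : ℝ), 0 ≤ τ → (∀ k, |r k| ≤ τ) →
      HasSum (fun k => r k • u k) z → ‖z‖ ≤ τ * B := by
    intro r z τ hτ hrle hz
    have h1 : Tendsto (fun K => ‖∑ k ∈ Finset.range K, r k • u k‖) atTop (𝓝 ‖z‖) :=
      hz.tendsto_sum_nat.norm
    exact le_of_tendsto h1 (Eventually.of_forall fun K => hup r K τ hτ hrle)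
  have hB : 0 < B := by
    have h0 := hlow 0
    have : u 0 = ∑ k ∈ Finset.range 1, (fun _ => (1:ℝ)) k • u k := by simp
    have h1 := hup (fun _ => (1:ℝ)) 1 1 zero_le_one (fun k => by norm_num)
    rw [← this] at h1
    nlinarith
  -- summability criterion
  have hsumm : ∀ (r : ℕ → ℝ), (∀ k, |r k| ≤ 1) → Tendsto r atTop (𝓝 0) →
      Summable (fun k => r k • u k) := by
    intro r hr1 hr0
    rw [summable_iff_vanishing_norm]
    intro ε hε
    have hτ : (0:ℝ) < ε / (2 * B) := by positivity
    obtain ⟨K, hK⟩ := (Metric.tendsto_atTop.mp hr0) (ε / (2 * B)) hτ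
    refine ⟨Finset.range K, fun T hT => ?_⟩
    have : ‖∑ k ∈ T, r k • u k‖ ≤ (ε / (2 * B)) * B := by
      refine hupT r T _ (le_of_lt hτ) fun k hk => ?_
      have hkK : K ≤ k := by
        by_contra h
        exact (Finset.disjoint_left.mp hT hk) (Finset.mem_range.mpr (by omega))
      have := hK k hkK
      rw [Real.dist_eq, sub_zero] at this
      exact le_of_lt this
    calc ‖∑ k ∈ T, r k • u k‖ ≤ (ε / (2 * B)) * B := this
      _ = ε / 2 := by field_simp
      _ < ε := by linarith
  -- computing coefficients of blocks
  have coef_u : ∀ i k, coef i (u k) = if i ∈ Finset.Ico (lo k) (hi k) then d k i else 0 := by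
    intro i k
    rw [hu]
    unfold blk
    rw [map_sum]
    have : ∀ i' ∈ Finset.Ico (lo k) (hi k), coef i (d k i' • e i')
        = if i = i' then d k i' else 0 := by
      intro i' _
      rw [(coef i).map_smul, smul_eq_mul, hbi i i']
      split_ifs <;> simp
    rw [Finset.sum_congr rfl this, Finset.sum_ite_eq]
  -- choice of a coefficient functional for each block
  have hex : ∀ k, ∃ i, coef i (u k) ≠ 0 := by
    intro k
    by_contra h
    push_neg at h
    have h2 := hrepr (u k)
    have h3 : (fun n => ∑ i ∈ Finset.range n, coef i (u k) • e i) = fun _ => (0 : X) := by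
      funext n
      exact Finset.sum_eq_zero fun i _ => by rw [h i, zero_smul]
    rw [h3] at h2
    exact hune k (tendsto_nhds_unique tendsto_const_nhds h2).symm
  choose ik hik using hex
  set c : ℕ → ℝ := fun k => coef (ik k) (u k) with hc
  have hcne : ∀ k, c k ≠ 0 := fun k => hik k
  have hikmem : ∀ k, ik k ∈ Finset.Ico (lo k) (hi k) := by
    intro k
    by_contra h
    exact hik k (by rw [coef_u, if_neg h])
  have coef_u_ne : ∀ j k, j ≠ k → coef (ik k) (u j) = 0 := by
    intro j k hjk
    rw [coef_u]
    rw [if_neg]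
    intro hmem
    exact hjk (win_disj lo hi hsep hwin hmem (hikmem k))
  -- uniqueness of coefficients
  have hUNIQ : ∀ (r : ℕ → ℝ) (x : X), HasSum (fun j => r j • u j) x →
      ∀ k, r k = coef (ik k) x / c k := by
    intro r x hx k
    have h1 : HasSum (fun j => coef (ik k) (r j • u j)) (coef (ik k) x) := hx.mapL _
    have h2 : (fun j => coef (ik k) (r j • u j))
        = fun j => if j = k then r k * c k else 0 := by
      funext j
      rw [(coef (ik k)).map_smul, smul_eq_mul]
      by_cases h : j = k
      · subst h; rw [if_pos rfl]
      · rw [if_neg h, coef_u_ne j k h, mul_zero]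
    rw [h2] at h1
    have h3 := (hasSum_ite_eq k (r k * c k)).unique h1
    rw [eq_div_iff (hcne k)]; exact h3
  -- lower coefficient bound
  have hcoefbd : ∀ (r : ℕ → ℝ) (z : X), HasSum (fun j => r j • u j) z →
      ∀ k, |r k| * δ ≤ ‖z‖ := by
    intro r z hz k
    have hev : ∀ K, k < K → ‖r k • u k‖ ≤ ‖∑ j ∈ Finset.range K, r j • u j‖ := by
      intro K hkK
      have h1 : ∑ j ∈ Finset.range K, (fun j => if j = k then r j else 0) j • u j
          = r k • u k := by
        rw [Finset.sum_congr rfl (fun j _ => by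
          show (if j = k then r j else 0) • u j = if j = k then r j • u j else 0
          split_ifs <;> simp)]
        rw [Finset.sum_ite_eq' (Finset.range K) k (fun j => r j • u j)]
        simp [Finset.mem_range.mpr hkK]
      rw [← h1, hu]
      refine blk_norm_mono e lo hi d hsep hwin hunc r _ (fun j => ?_) K
      by_cases h : j = k
      · rw [if_pos h]
      · rw [if_neg h, abs_zero]; exact abs_nonneg _
    have h2 : ‖r k • u k‖ ≤ ‖z‖ := by
      refine ge_of_tendsto hz.tendsto_sum_nat.norm ?_
      filter_upwards [eventually_gt_atTop k] with K hK
      exact hev K hK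
    calc |r k| * δ ≤ |r k| * ‖u k‖ := by
          exact mul_le_mul_of_nonneg_left (hlow k) (abs_nonneg _)
      _ = ‖r k • u k‖ := by rw [norm_smul, Real.norm_eq_abs]
      _ ≤ ‖z‖ := h2
  -- the candidate set
  set Kst : Set X := {x | ∃ t : ℕ → ℝ, (∀ k, 0 ≤ t k ∧ t k ≤ 1) ∧
    Tendsto t atTop (𝓝 0) ∧ HasSum (fun k => t k • u k) x} with hKst
  have h0K : (0:X) ∈ Kst := by
    refine ⟨fun _ => 0, fun k => by norm_num, tendsto_const_nhds, ?_⟩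
    simpa using hasSum_zero
  have hconv : Convex ℝ Kst := by
    intro x hx y hy a b ha hb hab
    obtain ⟨t, ht01, ht0, htsum⟩ := hx
    obtain ⟨s, hs01, hs0, hssum⟩ := hy
    refine ⟨fun k => a * t k + b * s k, fun k => ⟨?_, ?_⟩, ?_, ?_⟩
    · show 0 ≤ a * t k + b * s k
      nlinarith [(ht01 k).1, (hs01 k).1]
    · show a * t k + b * s k ≤ 1
      nlinarith [(ht01 k).1, (ht01 k).2, (hs01 k).2, (hs01 k).1]
    · have h1 := (ht0.const_mul a).add (hs0.const_mul b)
      simpa using h1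
    · have h1 := (htsum.const_smul a).add (hssum.const_smul b)
      have h2 : (fun k => a • (t k • u k) + b • (s k • u k))
          = fun k => (a * t k + b * s k) • u k := by
        funext k; rw [smul_smul, smul_smul, ← add_smul]
      rwa [h2] at h1
  have hbdd : Bornology.IsBounded Kst := by
    refine (Metric.isBounded_closedBall (x := (0:X)) (r := B)).subset ?_
    rintro x ⟨t, ht01, ht0, htsum⟩
    rw [Metric.mem_closedBall, dist_zero_right]
    have h1 := hnormle t x 1 zero_le_one
      (fun k => abs_le.mpr ⟨by linarith [(ht01 k).1], (ht01 k).2⟩) htsum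
    linarith
  have hclosed : IsClosed Kst := by
    rw [← isSeqClosed_iff_isClosed]
    intro xs x hxs hx
    choose ts hts using hxs
    have hts01 : ∀ m k, 0 ≤ ts m k ∧ ts m k ≤ 1 := fun m => (hts m).1
    have hts0 : ∀ m, Tendsto (ts m) atTop (𝓝 0) := fun m => (hts m).2.1
    have htsS : ∀ m, HasSum (fun k => ts m k • u k) (xs m) := fun m => (hts m).2.2
    have hdiff : ∀ m m' k, |ts m k - ts m' k| * δ ≤ ‖xs m - xs m'‖ := by
      intro m m' k
      have h1 : HasSum (fun j => (ts m j - ts m' j) • u j) (xs m - xs m') := by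
        have h2 := (htsS m).sub (htsS m')
        have h3 : (fun j => ts m j • u j - ts m' j • u j)
            = fun j => (ts m j - ts m' j) • u j := by
          funext j; rw [sub_smul]
        rwa [h3] at h2
      exact hcoefbd _ _ h1 k
    have hlim : ∀ k, ∃ L, Tendsto (fun m => ts m k) atTop (𝓝 L) := by
      intro k
      refine cauchySeq_tendsto_of_complete ?_
      rw [Metric.cauchySeq_iff]
      intro ε hε
      obtain ⟨N, hN⟩ := Metric.cauchySeq_iff.mp hx.cauchySeq (ε * δ) (by positivity)
      refine ⟨N, fun m hm m' hm' => ?_⟩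
      have h1 := hdiff m m' k
      have h2 := hN m hm m' hm'
      rw [dist_eq_norm] at h2
      rw [Real.dist_eq]
      nlinarith
    choose t ht using hlim
    have ht01 : ∀ k, 0 ≤ t k ∧ t k ≤ 1 := by
      intro k
      exact ⟨ge_of_tendsto (ht k) (Eventually.of_forall fun m => (hts01 m k).1),
        le_of_tendsto (ht k) (Eventually.of_forall fun m => (hts01 m k).2)⟩
    have hunif : ∀ m k, |ts m k - t k| * δ ≤ ‖xs m - x‖ := by
      intro m k
      have hL : Tendsto (fun m' => |ts m k - ts m' k| * δ) atTop (𝓝 (|ts m k - t k| * δ)) :=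
        ((tendsto_const_nhds.sub (ht k)).abs).mul_const δ
      have hR : Tendsto (fun m' => ‖xs m - xs m'‖) atTop (𝓝 (‖xs m - x‖)) :=
        (tendsto_const_nhds.sub hx).norm
      exact le_of_tendsto_of_tendsto' hL hR (fun m' => hdiff m m' k)
    have hxn : Tendsto (fun m => ‖xs m - x‖) atTop (𝓝 0) := by
      have h1 : Tendsto (fun m => xs m - x) atTop (𝓝 0) := by
        simpa using hx.sub (tendsto_const_nhds (x := x))
      simpa using h1.norm
    have ht0 : Tendsto t atTop (𝓝 0) := by
      rw [Metric.tendsto_atTop]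
      intro ε hε
      obtain ⟨M, hM⟩ := Metric.tendsto_atTop.mp hxn (ε * δ / 2) (by positivity)
      have hM2 := hM M le_rfl
      rw [Real.dist_eq, sub_zero, abs_of_nonneg (norm_nonneg _)] at hM2
      obtain ⟨K, hK⟩ := Metric.tendsto_atTop.mp (hts0 M) (ε / 2) (by positivity)
      refine ⟨K, fun k hk => ?_⟩
      have h1 := hK k hk
      rw [Real.dist_eq, sub_zero] at h1
      rw [Real.dist_eq, sub_zero]
      have h2 := hunif M k
      have h3 : |t k| ≤ |ts M k| + |ts M k - t k| := by
        have := abs_sub_abs_le_abs_sub (t k) (ts M k)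
        rw [abs_sub_comm (t k) (ts M k)] at this
        linarith [abs_nonneg (ts M k)]
      nlinarith [abs_nonneg (ts M k - t k)]
    have hsm : Summable (fun k => t k • u k) :=
      hsumm t (fun k => abs_le.mpr ⟨by linarith [(ht01 k).1], (ht01 k).2⟩) ht0
    obtain ⟨y, hy⟩ := hsm
    have hyx : y = x := by
      have hbnd : ∀ m, ‖y - xs m‖ ≤ (‖xs m - x‖ / δ) * B := by
        intro m
        have h1 : HasSum (fun j => (t j - ts m j) • u j) (y - xs m) := by
          have h2 := hy.sub (htsS m)
          have h3 : (fun j => t j • u j - ts m j • u j)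
              = fun j => (t j - ts m j) • u j := by
            funext j; rw [sub_smul]
          rwa [h3] at h2
        refine hnormle _ _ _ (by positivity) (fun k => ?_) h1
        rw [abs_sub_comm, le_div_iff₀ hδ]
        exact hunif m k
      have h2 : Tendsto (fun m => ‖y - xs m‖) atTop (𝓝 0) := by
        refine squeeze_zero (fun m => norm_nonneg _) hbnd ?_
        have := (hxn.div_const δ).mul_const B
        simpa using this
      have h3 : Tendsto xs atTop (𝓝 y) := by
        rw [tendsto_iff_norm_sub_tendsto_zero]
        have h4 : (fun m => ‖xs m - y‖) = fun m => ‖y - xs m‖ :=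
          funext fun m => norm_sub_rev _ _
        rw [h4]; exact h2
      exact tendsto_nhds_unique h3 hx
    exact ⟨t, ht01, ht0, hyx ▸ hy⟩
  -- damping sequence
  set μ : ℕ → ℝ := fun k => 1 / ((k : ℝ) + 2) with hμ
  have hμpos : ∀ k, 0 < μ k := fun k => by positivity
  have hμle : ∀ k, μ k ≤ 1 := by
    intro k
    rw [hμ]
    have h0 : (0:ℝ) ≤ (k:ℝ) := Nat.cast_nonneg k
    rw [div_le_one (by linarith)]
    linarith
  have hμ0 : Tendsto μ atTop (𝓝 0) := by
    have h1 : Tendsto (fun k : ℕ => (k:ℝ) + 2) atTop atTop :=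
      tendsto_atTop_add_const_right _ 2 tendsto_natCast_atTop_atTop
    simpa [hμ, one_div, Pi.inv_def] using h1.inv_tendsto_atTop
  have hwsum : Summable (fun k => μ k • u k) :=
    hsumm μ (fun k => abs_le.mpr ⟨by linarith [hμpos k], hμle k⟩) hμ0
  set w : X := ∑' k, μ k • u k with hwdef
  have hw : HasSum (fun k => μ k • u k) w := hwsum.hasSum
  set T : X → X := fun x => w + ∑' k, ((1 - μ k) * (coef (ik k) x / c k)) • u k with hT
  have hrepval : ∀ (t : ℕ → ℝ) (x : X), HasSum (fun k => t k • u k) x →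
      (fun k => ((1 - μ k) * (coef (ik k) x / c k)) • u k)
        = fun k => ((1 - μ k) * t k) • u k := by
    intro t x hx; funext k; rw [← hUNIQ t x hx k]
  have hsummx : ∀ (t : ℕ → ℝ), (∀ k, 0 ≤ t k ∧ t k ≤ 1) → Tendsto t atTop (𝓝 0) →
      Summable (fun k => ((1 - μ k) * t k) • u k) := by
    intro t ht01 ht0
    refine hsumm _ (fun k => ?_) ?_
    · rw [abs_mul]
      have h1 : |1 - μ k| ≤ 1 := abs_le.mpr ⟨by linarith [hμle k], by linarith [hμpos k]⟩
      have h2 : |t k| ≤ 1 := abs_le.mpr ⟨by linarith [(ht01 k).1], (ht01 k).2⟩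
      exact mul_le_one₀ h1 (abs_nonneg _) h2
    · refine squeeze_zero_norm (fun k => ?_) (by simpa using ht0.abs)
      rw [Real.norm_eq_abs, abs_mul]
      have h1 : |1 - μ k| ≤ 1 := abs_le.mpr ⟨by linarith [hμle k], by linarith [hμpos k]⟩
      exact mul_le_of_le_one_left (abs_nonneg _) h1
  have hTval : ∀ (t : ℕ → ℝ) (x : X), HasSum (fun k => t k • u k) x →
      T x = w + ∑' k, ((1 - μ k) * t k) • u k := by
    intro t x hx
    rw [hT]
    simp only []
    rw [hrepval t x hx]
  have hTchar : ∀ (x : X) (t : ℕ → ℝ), (∀ k, 0 ≤ t k ∧ t k ≤ 1) →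
      Tendsto t atTop (𝓝 0) → HasSum (fun k => t k • u k) x →
      HasSum (fun k => (μ k + (1 - μ k) * t k) • u k) (T x) := by
    intro x t ht01 ht0 hx
    have h1 := hsummx t ht01 ht0
    have h3 : HasSum (fun k => μ k • u k + ((1 - μ k) * t k) • u k)
        (w + ∑' k, ((1 - μ k) * t k) • u k) := hw.add h1.hasSum
    have h4 : (fun k => μ k • u k + ((1 - μ k) * t k) • u k)
        = fun k => (μ k + (1 - μ k) * t k) • u k := by
      funext k; rw [← add_smul]
    rw [h4] at h3
    rwa [← hTval t x hx] at h3
  -- T maps Kst into itself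
  have hmaps : Set.MapsTo T Kst Kst := by
    rintro x ⟨t, ht01, ht0, hx⟩
    refine ⟨fun k => μ k + (1 - μ k) * t k, fun k => ⟨?_, ?_⟩, ?_, hTchar x t ht01 ht0 hx⟩
    · show 0 ≤ μ k + (1 - μ k) * t k
      nlinarith [(ht01 k).1, hμpos k, hμle k]
    · show μ k + (1 - μ k) * t k ≤ 1
      nlinarith [(ht01 k).2, hμpos k, hμle k]
    · have h1 : Tendsto (fun k => μ k + t k) atTop (𝓝 0) := by
        simpa using hμ0.add ht0
      refine squeeze_zero (fun k => ?_) (fun k => ?_) h1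
      · show 0 ≤ μ k + (1 - μ k) * t k
        nlinarith [(ht01 k).1, hμpos k, hμle k]
      · show μ k + (1 - μ k) * t k ≤ μ k + t k
        nlinarith [(ht01 k).1, (ht01 k).2, hμpos k, hμle k]
  -- T is nonexpansive on Kst
  have hnonexp : ∀ y ∈ Kst, ∀ z ∈ Kst, ‖T y - T z‖ ≤ ‖y - z‖ := by
    rintro y ⟨t, ht01, ht0, hy⟩ z ⟨s, hs01, hs0, hz⟩
    have hTy := hTchar y t ht01 ht0 hy
    have hTz := hTchar z s hs01 hs0 hz
    have hdT : HasSum (fun k => ((1 - μ k) * (t k - s k)) • u k) (T y - T z) := by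
      have h1 := hTy.sub hTz
      have h2 : (fun k => (μ k + (1 - μ k) * t k) • u k - (μ k + (1 - μ k) * s k) • u k)
          = fun k => ((1 - μ k) * (t k - s k)) • u k := by
        funext k; rw [← sub_smul]; congr 1; ring
      rwa [h2] at h1
    have hdx : HasSum (fun k => (t k - s k) • u k) (y - z) := by
      have h1 := hy.sub hz
      have h2 : (fun k => t k • u k - s k • u k) = fun k => (t k - s k) • u k := by
        funext k; rw [← sub_smul]
      rwa [h2] at h1
    refine le_of_tendsto_of_tendsto' hdT.tendsto_sum_nat.norm hdx.tendsto_sum_nat.norm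
      (fun K => ?_)
    rw [hu]
    refine blk_norm_mono e lo hi d hsep hwin hunc _ _ (fun k => ?_) K
    rw [abs_mul]
    have h1 : |1 - μ k| ≤ 1 := abs_le.mpr ⟨by linarith [hμle k], by linarith [hμpos k]⟩
    exact mul_le_of_le_one_left (abs_nonneg _) h1
  -- T is affine on Kst
  have haff : ∀ y ∈ Kst, ∀ z ∈ Kst, ∀ l : ℝ, l ∈ Set.Icc (0:ℝ) 1 →
      T (l • y + (1 - l) • z) = l • T y + (1 - l) • T z := by
    rintro y ⟨t, ht01, ht0, hy⟩ z ⟨s, hs01, hs0, hz⟩ l ⟨hl0, hl1⟩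
    set q : ℕ → ℝ := fun k => l * t k + (1 - l) * s k with hq
    have hqsum : HasSum (fun k => q k • u k) (l • y + (1 - l) • z) := by
      have h1 := (hy.const_smul l).add (hz.const_smul (1 - l))
      have h2 : (fun k => l • (t k • u k) + (1 - l) • (s k • u k))
          = fun k => q k • u k := by
        funext k; rw [smul_smul, smul_smul, ← add_smul]
      rwa [h2] at h1
    have hA := (hsummx t ht01 ht0).hasSum
    have hC := (hsummx s hs01 hs0).hasSum
    have hcombo : HasSum (fun k => ((1 - μ k) * q k) • u k)
        (l • (∑' k, ((1 - μ k) * t k) • u k) + (1 - l) • (∑' k, ((1 - μ k) * s k) • u k)) := by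
      have h1 := (hA.const_smul l).add (hC.const_smul (1 - l))
      have h2 : (fun k => l • (((1 - μ k) * t k) • u k) + (1 - l) • (((1 - μ k) * s k) • u k))
          = fun k => ((1 - μ k) * q k) • u k := by
        funext k; rw [smul_smul, smul_smul, ← add_smul]; congr 1; rw [hq]; ring
      rwa [h2] at h1
    rw [hTval q _ hqsum, hTval t y hy, hTval s z hz]
    rw [hcombo.tsum_eq]
    rw [smul_add, smul_add]
    have h3 : l • w + (1 - l) • w = w := by
      rw [← add_smul]
      norm_num
    -- rearrange
    have : l • w + l • (∑' k, ((1 - μ k) * t k) • u k) + ((1 - l) • w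
        + (1 - l) • (∑' k, ((1 - μ k) * s k) • u k))
        = (l • w + (1 - l) • w) + (l • (∑' k, ((1 - μ k) * t k) • u k)
          + (1 - l) • (∑' k, ((1 - μ k) * s k) • u k)) := by abel
    rw [this, h3]
  -- apply the fixed point property
  obtain ⟨y, hyK, hTyy⟩ := hfpp Kst ⟨0, h0K⟩ hclosed hbdd hconv T hmaps hnonexp haff
  obtain ⟨t, ht01, ht0, hty⟩ := hyK
  have hTsum := hTchar y t ht01 ht0 hty
  rw [hTyy] at hTsum
  have hone : ∀ k, t k = 1 := by
    intro k
    have h1 := hUNIQ _ _ hTsum k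
    have h2 := hUNIQ t y hty k
    have h3 : μ k + (1 - μ k) * t k = t k := by rw [h1, ← h2]
    have h4 : μ k * (1 - t k) = 0 := by nlinarith [h3]
    rcases mul_eq_zero.mp h4 with h5 | h5
    · exact absurd h5 (ne_of_gt (hμpos k))
    · linarith
  have hconst : Tendsto (fun _ : ℕ => (1:ℝ)) atTop (𝓝 0) := by
    have ht' : t = fun _ => 1 := funext hone
    rwa [ht'] at ht0
  have := tendsto_nhds_unique hconst tendsto_const_nhds
  norm_num at this

set_option maxHeartbeats 1000000 in
lemma bdd_complete
    (e : ℕ → X) (coef : ℕ → X →L[ℝ] ℝ)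
    (hbi : ∀ i j, coef i (e j) = if i = j then (1 : ℝ) else 0)
    (hrepr : ∀ y : X,
      Tendsto (fun n => ∑ i ∈ Finset.range n, coef i y • e i) atTop (𝓝 y))
    (hunc : ∀ (n : ℕ) (c ε : ℕ → ℝ), (∀ i, ε i = 1 ∨ ε i = -1) →
      ‖∑ i ∈ Finset.range n, (ε i * c i) • e i‖ ≤ ‖∑ i ∈ Finset.range n, c i • e i‖)
    (hfpp : ∀ K : Set X, K.Nonempty → IsClosed K → Bornology.IsBounded K →
      Convex ℝ K → ∀ T : X → X, Set.MapsTo T K K →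
      (∀ y ∈ K, ∀ z ∈ K, ‖T y - T z‖ ≤ ‖y - z‖) →
      (∀ y ∈ K, ∀ z ∈ K, ∀ l : ℝ, l ∈ Set.Icc (0 : ℝ) 1 →
        T (l • y + (1 - l) • z) = l • T y + (1 - l) • T z) →
      ∃ y ∈ K, T y = y)
    (a : ℕ → ℝ) (B : ℝ) (hB : ∀ n, ‖∑ i ∈ Finset.range n, a i • e i‖ ≤ B) :
    CauchySeq (fun n => ∑ i ∈ Finset.range n, a i • e i) := by
  by_contra hnc
  rw [Metric.cauchySeq_iff] at hnc
  push_neg at hnc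
  obtain ⟨ε, hε, hcd⟩ := hnc
  have key : ∀ N : ℕ, ∃ mn : ℕ × ℕ, N ≤ mn.1 ∧ mn.1 < mn.2 ∧
      ε ≤ ‖(∑ i ∈ Finset.range mn.2, a i • e i) - ∑ i ∈ Finset.range mn.1, a i • e i‖ := by
    intro N
    obtain ⟨m, hm, n, hn, hd⟩ := hcd N
    rw [dist_eq_norm] at hd
    have hmn : m ≠ n := by
      intro h; subst h; simp at hd; linarith
    rcases lt_or_gt_of_ne hmn with h | h
    · exact ⟨(m, n), hm, h, by rwa [norm_sub_rev] at hd⟩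
    · exact ⟨(n, m), hn, h, hd⟩
  choose F hF1 hF2 hF3 using key
  set p : ℕ → ℕ × ℕ := fun k => Nat.rec (F 0) (fun _ pk => F pk.2) k with hp
  set lo : ℕ → ℕ := fun k => (p k).1 with hlo
  set hi : ℕ → ℕ := fun k => (p k).2 with hhi
  set d : ℕ → ℕ → ℝ := fun _ i => a i with hd
  have hps : ∀ k, p (k+1) = F (p k).2 := fun k => rfl
  have hwinlt : ∀ k, lo k < hi k := by
    intro k
    cases k with
    | zero => exact hF2 0
    | succ m =>
      show (p (m+1)).1 < (p (m+1)).2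
      rw [hps]; exact hF2 (p m).2
  have hwinp : ∀ k, lo k ≤ hi k := fun k => le_of_lt (hwinlt k)
  have hsepp : ∀ k, hi k ≤ lo (k+1) := by
    intro k
    show (p k).2 ≤ (p (k+1)).1
    rw [hps]
    exact hF1 (p k).2
  have hblk : ∀ k, blk e lo hi d k
      = (∑ i ∈ Finset.range (hi k), a i • e i) - ∑ i ∈ Finset.range (lo k), a i • e i := by
    intro k
    unfold blk
    rw [Finset.sum_Ico_eq_sub _ (hwinp k)]
  have hlowp : ∀ k, ε ≤ ‖blk e lo hi d k‖ := by
    intro k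
    rw [hblk k]
    cases k with
    | zero => exact hF3 0
    | succ m =>
      have h9 := hF3 (p m).2
      show ε ≤ ‖(∑ i ∈ Finset.range ((p (m+1)).2), a i • e i)
        - ∑ i ∈ Finset.range ((p (m+1)).1), a i • e i‖
      rw [hps]
      exact h9
  have hptw : ∀ (t : ℕ → ℝ) (τ : ℝ) (K i : ℕ), 0 ≤ τ → (∀ k, |t k| ≤ τ) →
      |cf lo hi d t K i| ≤ |τ * a i| := by
    intro t τ K i hτ ht
    by_cases hex : ∃ k, k < K ∧ i ∈ Finset.Ico (lo k) (hi k)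
    · obtain ⟨k, hk, hmem⟩ := hex
      rw [cf_eq_of_mem lo hi d hsepp hwinp hk hmem, abs_mul, abs_mul, abs_of_nonneg hτ]
      exact mul_le_mul_of_nonneg_right (ht k) (abs_nonneg _)
    · push_neg at hex
      rw [cf_eq_zero lo hi d hex, abs_zero]
      positivity
  have hupp : ∀ (t : ℕ → ℝ) (K : ℕ) (τ : ℝ), 0 ≤ τ → (∀ k, |t k| ≤ τ) →
      ‖∑ k ∈ Finset.range K, t k • blk e lo hi d k‖ ≤ τ * B := by
    intro t K τ hτ ht
    set N := (Finset.range K).sup hi with hN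
    have hNle : ∀ k, k < K → hi k ≤ N := fun k hk => Finset.le_sup (Finset.mem_range.mpr hk)
    rw [← cf_identity e lo hi d t K N hNle]
    calc ‖∑ i ∈ Finset.range N, cf lo hi d t K i • e i‖
        ≤ ‖∑ i ∈ Finset.range N, (τ * a i) • e i‖ :=
          norm_mono e hunc N _ _ (fun i => hptw t τ K i hτ ht)
      _ = τ * ‖∑ i ∈ Finset.range N, a i • e i‖ := by
          rw [show ∑ i ∈ Finset.range N, (τ * a i) • e i
              = τ • ∑ i ∈ Finset.range N, a i • e i by
            rw [Finset.smul_sum]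
            exact Finset.sum_congr rfl fun i _ => (smul_smul τ (a i) (e i)).symm]
          rw [norm_smul, Real.norm_eq_abs, abs_of_nonneg hτ]
      _ ≤ τ * B := mul_le_mul_of_nonneg_left (hB N) hτ
  exact no_bad_blocks e coef hbi hrepr hunc hfpp lo hi d hsepp hwinp ε B hε hlowp hupp

end construction


section shrinking
variable {X : Type*} [NormedAddCommGroup X] [NormedSpace ℝ X] [CompleteSpace X]

/-- partial sum operators -/
noncomputable def part (e : ℕ → X) (coef : ℕ → X →L[ℝ] ℝ) (n : ℕ) : X →L[ℝ] X :=
  ∑ i ∈ Finset.range n, (coef i).smulRight (e i)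

lemma part_apply (e : ℕ → X) (coef : ℕ → X →L[ℝ] ℝ) (n : ℕ) (x : X) :
    part e coef n x = ∑ i ∈ Finset.range n, coef i x • e i := by
  simp [part, ContinuousLinearMap.sum_apply, ContinuousLinearMap.smulRight_apply]

lemma exists_C (e : ℕ → X) (coef : ℕ → X →L[ℝ] ℝ)
    (hrepr : ∀ y : X,
      Tendsto (fun n => ∑ i ∈ Finset.range n, coef i y • e i) atTop (𝓝 y)) :
    ∃ C : ℝ, 1 ≤ C ∧ ∀ n, ‖part e coef n‖ ≤ C := by
  have hpt : ∀ x : X, ∃ C, ∀ n, ‖part e coef n x‖ ≤ C := by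
    intro x
    have h1 : Tendsto (fun n => ‖part e coef n x‖) atTop (𝓝 ‖x‖) := by
      have h2 := (hrepr x).norm
      have h3 : (fun n => ‖∑ i ∈ Finset.range n, coef i x • e i‖)
          = fun n => ‖part e coef n x‖ := by
        funext n; rw [part_apply]
      rwa [h3] at h2
    obtain ⟨C, hC⟩ := h1.bddAbove_range
    exact ⟨C, fun n => hC ⟨n, rfl⟩⟩
  obtain ⟨C0, hC0⟩ := banach_steinhaus hpt
  exact ⟨max C0 1, le_max_right _ _, fun n => le_trans (hC0 n) (le_max_left _ _)⟩

set_option maxHeartbeats 1000000 in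
lemma shrinking
    (e : ℕ → X) (coef : ℕ → X →L[ℝ] ℝ)
    (hbi : ∀ i j, coef i (e j) = if i = j then (1 : ℝ) else 0)
    (hrepr : ∀ y : X,
      Tendsto (fun n => ∑ i ∈ Finset.range n, coef i y • e i) atTop (𝓝 y))
    (hunc : ∀ (n : ℕ) (c ε : ℕ → ℝ), (∀ i, ε i = 1 ∨ ε i = -1) →
      ‖∑ i ∈ Finset.range n, (ε i * c i) • e i‖ ≤ ‖∑ i ∈ Finset.range n, c i • e i‖)
    (hnol1 : ¬ ∃ (f : lp (fun _ : ℕ => ℝ) 1 →L[ℝ] X) (c : ℝ), 0 < c ∧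
      ∀ y, c * ‖y‖ ≤ ‖f y‖)
    (g : X →L[ℝ] ℝ) :
    Tendsto (fun n => ‖g - g.comp (part e coef n)‖) atTop (𝓝 0) := by
  obtain ⟨C, hC1, hC⟩ := exists_C e coef hrepr
  by_contra hng
  rw [Metric.tendsto_atTop] at hng
  push_neg at hng
  obtain ⟨ε, hε, hcd⟩ := hng
  have hcd' : ∀ N, ∃ n ≥ N, ε ≤ ‖g - g.comp (part e coef n)‖ := by
    intro N
    obtain ⟨n, hn, hd⟩ := hcd N
    rw [Real.dist_eq, sub_zero, abs_of_nonneg (norm_nonneg _)] at hd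
    exact ⟨n, hn, hd⟩
  -- gliding hump
  have key : ∀ N : ℕ, ∃ q : ℕ × ℕ × X, N ≤ q.1 ∧ q.1 < q.2.1 ∧ ‖q.2.2‖ ≤ 1 ∧
      ε/2 < g (part e coef q.2.1 q.2.2 - part e coef q.1 q.2.2) := by
    intro N
    obtain ⟨n, hn, hd⟩ := hcd' N
    set h := g - g.comp (part e coef n) with hh
    have hx1 : ∃ x : X, ‖x‖ ≤ 1 ∧ ε/2 < ‖h x‖ := by
      by_contra hno
      push_neg at hno
      have hb : ∀ x : X, ‖h x‖ ≤ (ε/2) * ‖x‖ := by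
        intro x
        rcases eq_or_ne x 0 with rfl | hx0
        · simp
        · have h2 := hno (‖x‖⁻¹ • x) (by
            rw [norm_smul, norm_inv, norm_norm]
            rw [inv_mul_cancel₀ (norm_ne_zero_iff.mpr hx0)])
          rw [map_smul] at h2
          rw [norm_smul, norm_inv, norm_norm] at h2
          have hxpos : 0 < ‖x‖ := norm_pos_iff.mpr hx0
          rw [inv_mul_le_iff₀ hxpos] at h2
          linarith [h2]
      have := ContinuousLinearMap.opNorm_le_bound h (by positivity) hb
      linarith
    obtain ⟨x, hx, hhx⟩ := hx1
    -- replace x by ± x to make the value positive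
    have hx2 : ∃ x' : X, ‖x'‖ ≤ 1 ∧ ε/2 < h x' := by
      rcases le_or_gt 0 (h x) with h0 | h0
      · exact ⟨x, hx, by rwa [Real.norm_eq_abs, abs_of_nonneg h0] at hhx⟩
      · refine ⟨-x, by rwa [norm_neg], ?_⟩
        rw [map_neg]
        rw [Real.norm_eq_abs, abs_of_neg h0] at hhx
        linarith
    obtain ⟨x', hx', hval⟩ := hx2
    -- h x' = g (x' - part n x'); truncate the tail
    have hlim : Tendsto (fun m => g (part e coef m x' - part e coef n x')) atTop
        (𝓝 (g (x' - part e coef n x'))) := by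
      have h1 : Tendsto (fun m => part e coef m x') atTop (𝓝 x') := by
        have h2 := hrepr x'
        have h3 : (fun m => ∑ i ∈ Finset.range m, coef i x' • e i)
            = fun m => part e coef m x' := by
          funext m; rw [part_apply]
        rwa [h3] at h2
      exact (g.continuous.tendsto _).comp ((h1.sub tendsto_const_nhds))
    have hval' : ε/2 < g (x' - part e coef n x') := by
      have : h x' = g (x' - part e coef n x') := by
        rw [hh]; simp [ContinuousLinearMap.sub_apply, map_sub]
      rwa [this] at hval
    have hev : ∀ᶠ m in atTop, ε/2 < g (part e coef m x' - part e coef n x') :=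
      hlim.eventually (eventually_gt_nhds hval')
    obtain ⟨m, hm1, hm2⟩ := (hev.and (eventually_gt_atTop n)).exists
    exact ⟨(n, m, x'), hn, hm2, hx', hm1⟩
  choose F hF1 hF2 hF3 hF4 using key
  set p : ℕ → ℕ × ℕ × X := fun k => Nat.rec (F 0) (fun _ pk => F pk.2.1) k with hp
  set lo : ℕ → ℕ := fun k => (p k).1 with hlo
  set hi : ℕ → ℕ := fun k => (p k).2.1 with hhi
  set xx : ℕ → X := fun k => (p k).2.2 with hxx
  set d : ℕ → ℕ → ℝ := fun k i => coef i (xx k) with hd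
  have hps : ∀ k, p (k+1) = F (p k).2.1 := fun k => rfl
  have hprop : ∀ k, lo k < hi k ∧ ‖xx k‖ ≤ 1 ∧
      ε/2 < g (part e coef (hi k) (xx k) - part e coef (lo k) (xx k)) := by
    intro k
    cases k with
    | zero => exact ⟨hF2 0, hF3 0, hF4 0⟩
    | succ m =>
      refine ⟨?_, ?_, ?_⟩
      · show (p (m+1)).1 < (p (m+1)).2.1
        rw [hps]; exact hF2 (p m).2.1
      · show ‖(p (m+1)).2.2‖ ≤ 1
        rw [hps]; exact hF3 (p m).2.1
      · show ε/2 < g (part e coef ((p (m+1)).2.1) ((p (m+1)).2.2)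
          - part e coef ((p (m+1)).1) ((p (m+1)).2.2))
        rw [hps]; exact hF4 (p m).2.1
  have hwinp : ∀ k, lo k ≤ hi k := fun k => le_of_lt (hprop k).1
  have hsepp : ∀ k, hi k ≤ lo (k+1) := by
    intro k
    show (p k).2.1 ≤ (p (k+1)).1
    rw [hps]
    exact hF1 (p k).2.1
  have hblk : ∀ k, blk e lo hi d k
      = part e coef (hi k) (xx k) - part e coef (lo k) (xx k) := by
    intro k
    unfold blk
    rw [part_apply, part_apply, ← Finset.sum_Ico_eq_sub _ (hwinp k)]
  have hgblk : ∀ k, ε/2 < g (blk e lo hi d k) := by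
    intro k; rw [hblk k]; exact (hprop k).2.2
  have hblkbd : ∀ k, ‖blk e lo hi d k‖ ≤ 2*C := by
    intro k
    rw [hblk k]
    refine (norm_sub_le _ _).trans ?_
    have h1 := (part e coef (hi k)).le_opNorm (xx k)
    have h2 := (part e coef (lo k)).le_opNorm (xx k)
    have h3 := hC (hi k); have h4 := hC (lo k)
    have h5 := (hprop k).2.1
    have h6 := norm_nonneg (xx k)
    nlinarith
  have hgpos : 0 < ‖g‖ := by
    by_contra hg0
    push_neg at hg0
    have hzero : g = 0 := by
      ext x
      have h := g.le_opNorm x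
      have h2 : ‖g x‖ ≤ 0 := le_trans h (by nlinarith [norm_nonneg x])
      simpa using norm_le_zero_iff.mp h2
    have h8 := hgblk 0
    rw [hzero] at h8
    simp at h8
    linarith
  -- ℓ¹ lower bound for finite combinations
  have habs_eq : ∀ (t : ℕ → ℝ) (K : ℕ),
      ‖∑ k ∈ Finset.range K, |t k| • blk e lo hi d k‖
        = ‖∑ k ∈ Finset.range K, t k • blk e lo hi d k‖ := by
    intro t K
    refine le_antisymm ?_ ?_
    · exact blk_norm_mono e lo hi d hsepp hwinp hunc t _ (fun k => by rw [abs_abs]) K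
    · exact blk_norm_mono e lo hi d hsepp hwinp hunc (fun k => |t k|) _
        (fun k => by rw [abs_abs]) K
  have hLB : ∀ (t : ℕ → ℝ) (K : ℕ),
      (ε/2) * ∑ k ∈ Finset.range K, |t k|
        ≤ ‖g‖ * ‖∑ k ∈ Finset.range K, t k • blk e lo hi d k‖ := by
    intro t K
    rw [← habs_eq t K]
    have h1 : g (∑ k ∈ Finset.range K, |t k| • blk e lo hi d k)
        = ∑ k ∈ Finset.range K, |t k| * g (blk e lo hi d k) := by
      rw [map_sum]
      exact Finset.sum_congr rfl fun k _ => by rw [map_smul, smul_eq_mul]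
    have h2 : (ε/2) * ∑ k ∈ Finset.range K, |t k|
        ≤ ∑ k ∈ Finset.range K, |t k| * g (blk e lo hi d k) := by
      rw [Finset.mul_sum]
      refine Finset.sum_le_sum fun k _ => ?_
      rw [mul_comm]
      exact mul_le_mul_of_nonneg_left (le_of_lt (hgblk k)) (abs_nonneg _)
    have h3 : g (∑ k ∈ Finset.range K, |t k| • blk e lo hi d k)
        ≤ ‖g‖ * ‖∑ k ∈ Finset.range K, |t k| • blk e lo hi d k‖ := by
      have h4 := g.le_opNorm (∑ k ∈ Finset.range K, |t k| • blk e lo hi d k)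
      have h5 := le_abs_self (g (∑ k ∈ Finset.range K, |t k| • blk e lo hi d k))
      rw [Real.norm_eq_abs] at h4
      linarith
    rw [h1] at h3
    linarith
  -- build the ℓ¹ embedding
  have hsummy : ∀ y : lp (fun _ : ℕ => ℝ) 1, Summable fun k => |y k| := by
    intro y
    have h1 := lp.memℓp y
    rw [memℓp_gen_iff (by simp : (0:ℝ) < (1 : ENNReal).toReal)] at h1
    simpa using h1
  have hsummyb : ∀ y : lp (fun _ : ℕ => ℝ) 1, Summable fun k => y k • blk e lo hi d k := by
    intro y
    refine Summable.of_norm ?_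
    refine Summable.of_nonneg_of_le (fun k => norm_nonneg _) (fun k => ?_)
      (((hsummy y).mul_right (2*C)))
    rw [norm_smul, Real.norm_eq_abs]
    have h1 := hblkbd k
    have h2 := abs_nonneg (y k)
    nlinarith
  have hnormy : ∀ y : lp (fun _ : ℕ => ℝ) 1, ‖y‖ = ∑' k, |y k| := by
    intro y
    rw [lp.norm_eq_tsum_rpow (by simp : (0:ℝ) < (1 : ENNReal).toReal)]
    simp [Real.rpow_one]
  set flin : lp (fun _ : ℕ => ℝ) 1 →ₗ[ℝ] X :=
    { toFun := fun y => ∑' k, y k • blk e lo hi d k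
      map_add' := by
        intro y z
        show (∑' k, (y + z) k • blk e lo hi d k)
          = (∑' k, y k • blk e lo hi d k) + ∑' k, z k • blk e lo hi d k
        rw [← ((hsummyb y).hasSum.add (hsummyb z).hasSum).tsum_eq]
        congr 1
        funext k
        rw [lp.coeFn_add, Pi.add_apply, add_smul]
      map_smul' := by
        intro m y
        show (∑' k, (m • y) k • blk e lo hi d k) = m • ∑' k, y k • blk e lo hi d k
        rw [← ((hsummyb y).hasSum.const_smul m).tsum_eq]
        congr 1
        funext k
        rw [lp.coeFn_smul, Pi.smul_apply, smul_smul, smul_eq_mul] } with hflin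
  have hfbound : ∀ y, ‖flin y‖ ≤ (2*C) * ‖y‖ := by
    intro y
    have h1 : ‖∑' k, y k • blk e lo hi d k‖ ≤ ∑' k, ‖y k • blk e lo hi d k‖ := by
      refine norm_tsum_le_tsum_norm ?_
      refine Summable.of_nonneg_of_le (fun k => norm_nonneg _) (fun k => ?_)
        (((hsummy y).mul_right (2*C)))
      rw [norm_smul, Real.norm_eq_abs]
      have := hblkbd k
      have := abs_nonneg (y k)
      nlinarith
    have h2 : ∑' k, ‖y k • blk e lo hi d k‖ ≤ ∑' k, (2*C) * |y k| := by
      refine Summable.tsum_le_tsum (fun k => ?_) ?_ ?_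
      · rw [norm_smul, Real.norm_eq_abs]
        have := hblkbd k
        have := abs_nonneg (y k)
        nlinarith
      · refine Summable.of_nonneg_of_le (fun k => norm_nonneg _) (fun k => ?_)
          ((hsummy y).mul_left (2*C))
        rw [norm_smul, Real.norm_eq_abs]
        have := hblkbd k
        have := abs_nonneg (y k)
        nlinarith
      · exact (hsummy y).mul_left (2*C)
    have h3 : ∑' k, (2*C) * |y k| = (2*C) * ‖y‖ := by
      rw [Summable.tsum_mul_left _ (hsummy y), hnormy y]
    have h0 : ‖flin y‖ = ‖∑' k, y k • blk e lo hi d k‖ := rfl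
    rw [h0]
    linarith
  set f : lp (fun _ : ℕ => ℝ) 1 →L[ℝ] X := flin.mkContinuous (2*C) hfbound with hf
  have hflower : ∀ y, (ε/(2*‖g‖)) * ‖y‖ ≤ ‖f y‖ := by
    intro y
    have hfy : f y = ∑' k, y k • blk e lo hi d k := rfl
    have h1 : Tendsto (fun K => ∑ k ∈ Finset.range K, |y k|) atTop (𝓝 (∑' k, |y k|)) :=
      (hsummy y).hasSum.tendsto_sum_nat
    have h2 : Tendsto (fun K => ‖g‖ * ‖∑ k ∈ Finset.range K, y k • blk e lo hi d k‖) atTop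
        (𝓝 (‖g‖ * ‖f y‖)) := by
      rw [hfy]
      exact ((hsummyb y).hasSum.tendsto_sum_nat.norm).const_mul _
    have h3 : (ε/2) * (∑' k, |y k|) ≤ ‖g‖ * ‖f y‖ :=
      le_of_tendsto_of_tendsto' (h1.const_mul (ε/2)) h2 (fun K => hLB (fun k => y k) K)
    rw [← hnormy y] at h3
    rw [div_mul_eq_mul_div, div_le_iff₀ (by positivity : (0:ℝ) < 2*‖g‖)]
    nlinarith [h3]
  exact hnol1 ⟨f, ε/(2*‖g‖), by positivity, hflower⟩

end shrinking


set_option maxHeartbeats 1000000 in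
/-- Corollary 5.5, part (iii) ⇒ (i): Let `X` be a Banach space
with a `1`-unconditional Schauder basis containing no isomorphic copy of `ℓ₁`.
If every nonempty closed bounded convex subset of `X` has the fixed point
property for affine nonexpansive mappings, then `X` is reflexive (the
canonical embedding into the double dual is surjective). -/
theorem oneUnconditional_no_l1_FPP_reflexive
    {X : Type*} [NormedAddCommGroup X] [NormedSpace ℝ X] [CompleteSpace X]
    (e : ℕ → X) (coef : ℕ → X →L[ℝ] ℝ)
    (hbi : ∀ i j, coef i (e j) = if i = j then (1 : ℝ) else 0)
    (hrepr : ∀ y : X,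
      Tendsto (fun n => ∑ i ∈ Finset.range n, coef i y • e i) atTop (𝓝 y))
    -- the basis is 1-unconditional
    (hunc : ∀ (n : ℕ) (c ε : ℕ → ℝ), (∀ i, ε i = 1 ∨ ε i = -1) →
      ‖∑ i ∈ Finset.range n, (ε i * c i) • e i‖ ≤ ‖∑ i ∈ Finset.range n, c i • e i‖)
    -- no subspace of X is isomorphic to ℓ₁
    (hnol1 : ¬ ∃ (f : lp (fun _ : ℕ => ℝ) 1 →L[ℝ] X) (c : ℝ), 0 < c ∧
      ∀ y, c * ‖y‖ ≤ ‖f y‖)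
    -- every nonempty closed bounded convex set has the FPP for affine
    -- nonexpansive maps
    (hfpp : ∀ K : Set X, K.Nonempty → IsClosed K → Bornology.IsBounded K →
      Convex ℝ K → ∀ T : X → X, Set.MapsTo T K K →
      (∀ y ∈ K, ∀ z ∈ K, ‖T y - T z‖ ≤ ‖y - z‖) →
      (∀ y ∈ K, ∀ z ∈ K, ∀ l : ℝ, l ∈ Set.Icc (0 : ℝ) 1 →
        T (l • y + (1 - l) • z) = l • T y + (1 - l) • T z) →
      ∃ y ∈ K, T y = y) :
    Function.Surjective (NormedSpace.inclusionInDoubleDual ℝ X) := by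
  intro F
  obtain ⟨C, hC1, hC⟩ := exists_C e coef hrepr
  set a : ℕ → ℝ := fun i => F (coef i) with ha
  have hkey : ∀ (g : X →L[ℝ] ℝ) (n : ℕ), g (∑ i ∈ Finset.range n, a i • e i)
      = F (g.comp (part e coef n)) := by
    intro g n
    have h2 : g.comp (part e coef n) = ∑ i ∈ Finset.range n, g (e i) • coef i := by
      ext x
      rw [ContinuousLinearMap.comp_apply, part_apply, map_sum,
        ContinuousLinearMap.sum_apply]
      refine Finset.sum_congr rfl fun i _ => ?_
      rw [map_smul, smul_eq_mul, ContinuousLinearMap.smul_apply, smul_eq_mul]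
      ring
    rw [h2, map_sum, map_sum]
    refine Finset.sum_congr rfl fun i _ => ?_
    rw [map_smul, map_smul, smul_eq_mul, smul_eq_mul]
    show a i * g (e i) = g (e i) * F (coef i)
    rw [ha]
    ring
  have hbd : ∀ n, ‖∑ i ∈ Finset.range n, a i • e i‖ ≤ ‖F‖ * C := by
    intro n
    refine NormedSpace.norm_le_dual_bound ℝ _ (by positivity) (fun g => ?_)
    calc ‖g (∑ i ∈ Finset.range n, a i • e i)‖
        = ‖F (g.comp (part e coef n))‖ := by rw [hkey g n]
      _ ≤ ‖F‖ * ‖g.comp (part e coef n)‖ := F.le_opNorm _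
      _ ≤ ‖F‖ * (‖g‖ * ‖part e coef n‖) :=
          mul_le_mul_of_nonneg_left (g.opNorm_comp_le _) (norm_nonneg F)
      _ ≤ ‖F‖ * C * ‖g‖ := by
          have h3 := hC n
          have h4 := norm_nonneg g
          have h5 := norm_nonneg F
          nlinarith [norm_nonneg (part e coef n),
            mul_le_mul_of_nonneg_left h3 (mul_nonneg h5 h4)]
  have hcauchy := bdd_complete e coef hbi hrepr hunc hfpp a (‖F‖ * C) hbd
  obtain ⟨x, hx⟩ := cauchySeq_tendsto_of_complete hcauchy
  refine ⟨x, ?_⟩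
  ext g
  rw [NormedSpace.dual_def]
  have h2 : Tendsto (fun n => g (∑ i ∈ Finset.range n, a i • e i)) atTop (𝓝 (g x)) :=
    (g.continuous.tendsto x).comp hx
  have h3 : Tendsto (fun n => F (g.comp (part e coef n))) atTop (𝓝 (F g)) := by
    rw [tendsto_iff_norm_sub_tendsto_zero]
    have hb : ∀ n, ‖F (g.comp (part e coef n)) - F g‖
        ≤ ‖F‖ * ‖g - g.comp (part e coef n)‖ := by
      intro n
      rw [← map_sub]
      calc ‖F (g.comp (part e coef n) - g)‖
          ≤ ‖F‖ * ‖g.comp (part e coef n) - g‖ := F.le_opNorm _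
        _ = ‖F‖ * ‖g - g.comp (part e coef n)‖ := by rw [norm_sub_rev]
    have h5 := (shrinking e coef hbi hrepr hunc hnol1 g).const_mul ‖F‖
    have h6 : Tendsto (fun n => ‖F‖ * ‖g - g.comp (part e coef n)‖) atTop (𝓝 0) := by
      simpa using h5
    exact squeeze_zero (fun n => norm_nonneg _) hb h6
  have h4 : (fun n => g (∑ i ∈ Finset.range n, a i • e i))
      = fun n => F (g.comp (part e coef n)) := funext (hkey g)
  rw [h4] at h2
  exact tendsto_nhds_unique h2 h3
end

section
/- Let X be a Banach space with a pre-monotone Schauder basis (i.e., ‖x − P_n x‖ ≤ ‖x‖ for all x and n, where P_n are the basis projections). If X contains a subspace isomorphic to c₀, then X contains a pre-monotone basic sequence equivalent to the unit vector basis of c₀. -/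
open Finset Filter Topology ZeroAtInfty

noncomputable def myDelta (k : ℕ) : ZeroAtInftyContinuousMap ℕ ℝ :=
  { toFun := fun m => if m = k then (1:ℝ) else 0
    continuous_toFun := continuous_of_discreteTopology
    zero_at_infty' := by
      rw [Filter.cocompact_eq_cofinite]
      apply Filter.Tendsto.congr' _ tendsto_const_nhds
      rw [Filter.eventuallyEq_iff_exists_mem]
      exact ⟨{k}ᶜ, by simp [Filter.mem_cofinite], fun m hm => by
        simp [Set.mem_compl_iff] at hm; simp [hm]⟩ }

@[simp] theorem myDelta_apply (k m : ℕ) : myDelta k m = if m = k then (1:ℝ) else 0 := rfl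

theorem myC0_abs_le_norm (g : ZeroAtInftyContinuousMap ℕ ℝ) (m : ℕ) : |g m| ≤ ‖g‖ := by
  rw [← ZeroAtInftyContinuousMap.norm_toBCF_eq_norm]
  exact (g.toBCF.norm_coe_le_norm m)

theorem myC0_norm_le (g : ZeroAtInftyContinuousMap ℕ ℝ) (C : ℝ) (hC : 0 ≤ C)
    (h : ∀ m, |g m| ≤ C) : ‖g‖ ≤ C := by
  rw [← ZeroAtInftyContinuousMap.norm_toBCF_eq_norm]
  exact BoundedContinuousFunction.norm_le hC |>.2 h

theorem myC0_sum_apply (s : Finset ℕ) (b : ℕ → ℝ) (κ : ℕ → ℕ) (m : ℕ) :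
    (∑ k ∈ s, b k • myDelta (κ k)) m = ∑ k ∈ s, b k * (if m = κ k then (1:ℝ) else 0) := by
  induction s using Finset.induction with
  | empty => simp
  | @insert _ _ h ih =>
      rw [Finset.sum_insert h, Finset.sum_insert h]
      simp only [ZeroAtInftyContinuousMap.coe_add, ZeroAtInftyContinuousMap.coe_smul,
        Pi.add_apply, Pi.smul_apply, smul_eq_mul, myDelta_apply, ih]

theorem myDelta_weaknull (φ : ZeroAtInftyContinuousMap ℕ ℝ →L[ℝ] ℝ) :
    Tendsto (fun k => φ (myDelta k)) atTop (𝓝 0) := by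
  have hsum : Summable fun k => |φ (myDelta k)| := by
    apply summable_of_sum_le (fun _ => abs_nonneg _)
    intro s
    set sgn : ℕ → ℝ := fun k => if 0 ≤ φ (myDelta k) then 1 else -1 with hsgn
    set g : ZeroAtInftyContinuousMap ℕ ℝ := ∑ k ∈ s, sgn k • myDelta k with hg
    have hgval : ∀ m, g m = if m ∈ s then sgn m else 0 := by
      intro m
      rw [hg, myC0_sum_apply s sgn (fun k => k)]
      by_cases hm : m ∈ s
      · rw [Finset.sum_eq_single m (fun b _ hb => by simp [Ne.symm hb]) (fun h => absurd hm h)]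
        simp [hm]
      · rw [Finset.sum_eq_zero]
        · simp [hm]
        · intro k hk
          have : m ≠ k := fun h => hm (h ▸ hk)
          simp [this]
    have hgnorm : ‖g‖ ≤ 1 := by
      refine myC0_norm_le g 1 zero_le_one fun m => ?_
      rw [hgval m]
      split
      · simp only [hsgn]; split <;> norm_num
      · norm_num
    have hφg : φ g = ∑ k ∈ s, |φ (myDelta k)| := by
      rw [hg, map_sum]
      refine Finset.sum_congr rfl fun k _ => ?_
      rw [map_smul, smul_eq_mul]
      show (if 0 ≤ φ (myDelta k) then (1:ℝ) else -1) * _ = _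
      split <;> rename_i h
      · rw [one_mul, abs_of_nonneg h]
      · rw [abs_of_neg (lt_of_not_ge h)]; ring
    calc ∑ k ∈ s, |φ (myDelta k)| = φ g := hφg.symm
      _ ≤ ‖φ g‖ := le_abs_self _
      _ ≤ ‖φ‖ * ‖g‖ := φ.le_opNorm g
      _ ≤ ‖φ‖ * 1 := by nlinarith [norm_nonneg φ]
      _ = ‖φ‖ := mul_one _
  have := hsum.tendsto_atTop_zero
  rw [tendsto_zero_iff_abs_tendsto_zero]
  exact this

theorem mySup_bounds (n : ℕ) (a : ℕ → ℝ) :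
    (0 ≤ ⨆ i ∈ Finset.range n, |a i|) ∧
      ∀ j ∈ Finset.range n, |a j| ≤ ⨆ i ∈ Finset.range n, |a i| := by
  set g : ℕ → ℝ := fun i => ⨆ _ : i ∈ Finset.range n, |a i| with hgdef
  have hgval_mem : ∀ i ∈ Finset.range n, g i = |a i| := fun i hi => ciSup_pos hi
  have hgval_nmem : ∀ i, i ∉ Finset.range n → g i = 0 := by
    intro i hi
    haveI : IsEmpty (i ∈ Finset.range n) := ⟨hi⟩
    exact Real.iSup_of_isEmpty (fun _ : i ∈ Finset.range n => |a i|)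
  have hbdd : BddAbove (Set.range g) := by
    refine ⟨∑ i ∈ Finset.range n, |a i|, ?_⟩
    rintro _ ⟨i, rfl⟩
    by_cases hi : i ∈ Finset.range n
    · rw [hgval_mem i hi]
      exact Finset.single_le_sum (f := fun j => |a j|) (fun j _ => abs_nonneg _) hi
    · rw [hgval_nmem i hi]
      exact Finset.sum_nonneg fun j _ => abs_nonneg _
    
  constructor
  · calc (0:ℝ) = g n := by rw [hgval_nmem n (by simp)]
      _ ≤ ⨆ i, g i := le_ciSup hbdd n
  · intro j hj
    calc |a j| = g j := (hgval_mem j hj).symm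
      _ ≤ ⨆ i, g i := le_ciSup hbdd j

/-- Proposition 5.1, key step: If a Banach space `X` with a
pre-monotone Schauder basis contains a subspace isomorphic to `c₀`, then it
contains a pre-monotone basic sequence equivalent to the unit vector basis of
`c₀` (pre-monotonicity of the sequence is expressed via its tail projections
on finite linear combinations, which are dense in its closed span). -/
theorem premonotone_basis_c0_copy
    {X : Type*} [NormedAddCommGroup X] [NormedSpace ℝ X] [CompleteSpace X]
    (e : ℕ → X) (coef : ℕ → X →L[ℝ] ℝ)
    (hbi : ∀ i j, coef i (e j) = if i = j then (1 : ℝ) else 0)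
    (hrepr : ∀ y : X,
      Tendsto (fun n => ∑ i ∈ Finset.range n, coef i y • e i) atTop (𝓝 y))
    -- the basis is pre-monotone
    (hpm : ∀ (m n : ℕ) (c : ℕ → ℝ),
      ‖∑ i ∈ Finset.Ico n m, c i • e i‖ ≤ ‖∑ i ∈ Finset.range m, c i • e i‖)
    -- X contains a subspace isomorphic to c₀
    (hc0 : ∃ (f : ZeroAtInftyContinuousMap ℕ ℝ →L[ℝ] X) (c : ℝ), 0 < c ∧ ∀ y, c * ‖y‖ ≤ ‖f y‖) :
    ∃ x : ℕ → X,
      -- pre-monotone basic sequence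
      (∀ (m n : ℕ) (a : ℕ → ℝ),
        ‖∑ i ∈ Finset.Ico n m, a i • x i‖ ≤ ‖∑ i ∈ Finset.range m, a i • x i‖) ∧
      -- equivalent to the unit vector basis of c₀
      ∃ A B : ℝ, 0 < A ∧ 0 < B ∧
        (∀ (n : ℕ) (a : ℕ → ℝ) (j : ℕ), j < n →
          A * |a j| ≤ ‖∑ i ∈ Finset.range n, a i • x i‖) ∧
        (∀ (n : ℕ) (a : ℕ → ℝ),
          ‖∑ i ∈ Finset.range n, a i • x i‖ ≤ B * ⨆ i ∈ Finset.range n, |a i|) := by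
  obtain ⟨f, c, hc, hf⟩ := hc0
  set u : ℕ → X := fun k => f (myDelta k) with hu
  -- coordinates of u tend to 0
  have hcoord : ∀ i : ℕ, Tendsto (fun k => coef i (u k)) atTop (𝓝 0) := by
    intro i
    exact myDelta_weaknull ((coef i).comp f)
  set ε : ℕ → ℝ := fun j => c / 8 * (1/2) ^ j with hεdef
  have hε : ∀ j, 0 < ε j := fun j => by positivity
  -- gliding hump step
  have hstep : ∀ j K n : ℕ, ∃ k n' : ℕ, K < k ∧ n < n' ∧
      ‖∑ i ∈ Finset.range n, coef i (u k) • e i‖ ≤ ε j ∧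
      ‖u k - ∑ i ∈ Finset.range n', coef i (u k) • e i‖ ≤ ε j := by
    intro j K n
    have hP : Tendsto (fun k => ∑ i ∈ Finset.range n, coef i (u k) • e i) atTop (𝓝 0) := by
      have : Tendsto (fun k => ∑ i ∈ Finset.range n, coef i (u k) • e i) atTop
          (𝓝 (∑ i ∈ Finset.range n, (0:ℝ) • e i)) :=
        tendsto_finset_sum _ fun i _ => (hcoord i).smul_const (e i)
      simpa using this
    have h1 : ∀ᶠ k in atTop, ‖∑ i ∈ Finset.range n, coef i (u k) • e i‖ ≤ ε j := by
      have := hP.norm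
      simp only [norm_zero] at this
      exact this.eventually_le_const (hε j)
    obtain ⟨k, hkK, hk⟩ := ((eventually_gt_atTop K).and h1).exists
    have h2 : ∀ᶠ n' in atTop, ‖u k - ∑ i ∈ Finset.range n', coef i (u k) • e i‖ ≤ ε j := by
      have h3 : Tendsto (fun n' => ‖u k - ∑ i ∈ Finset.range n', coef i (u k) • e i‖) atTop (𝓝 0) := by
        have h4 := ((hrepr (u k)).sub
          (tendsto_const_nhds : Tendsto (fun _ : ℕ => u k) atTop (𝓝 (u k)))).norm
        simp only [sub_self, norm_zero] at h4
        convert h4 using 2 with n'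
        rw [norm_sub_rev]
      exact h3.eventually_le_const (hε j)
    obtain ⟨n', hn'n, hn'⟩ := ((eventually_gt_atTop n).and h2).exists
    exact ⟨k, n', hkK, hn'n, hk, hn'⟩
  choose F G hFK hGn hhead htail using hstep
  -- recursive construction
  set p : ℕ → ℕ × ℕ := fun j =>
    Nat.rec (F 0 0 0, G 0 0 0) (fun j q => (F (j+1) q.1 q.2, G (j+1) q.1 q.2)) j with hp
  have hpsucc : ∀ j, p (j+1) = (F (j+1) (p j).1 (p j).2, G (j+1) (p j).1 (p j).2) :=
    fun j => rfl
  set k : ℕ → ℕ := fun j => (p j).1 with hk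
  set nn : ℕ → ℕ := fun j => Nat.rec 0 (fun j _ => (p j).2) j with hnn
  have hnn0 : nn 0 = 0 := rfl
  have hnnsucc : ∀ j, nn (j+1) = (p j).2 := fun j => rfl
  have hkmono : StrictMono k := by
    apply strictMono_nat_of_lt_succ
    intro j
    exact hFK (j+1) (p j).1 (p j).2
  have hnnmono : StrictMono nn := by
    apply strictMono_nat_of_lt_succ
    intro j
    cases j with
    | zero => exact hGn 0 0 0
    | succ i => exact hGn (i+1) (p i).1 (p i).2
  have hhead' : ∀ j, ‖∑ i ∈ Finset.range (nn j), coef i (u (k j)) • e i‖ ≤ ε j := by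
    intro j
    cases j with
    | zero => rw [hnn0]; simp; exact le_of_lt (hε 0)
    | succ i => exact hhead (i+1) (p i).1 (p i).2
  have htail' : ∀ j, ‖u (k j) - ∑ i ∈ Finset.range (nn (j+1)), coef i (u (k j)) • e i‖ ≤ ε j := by
    intro j
    cases j with
    | zero => exact htail 0 0 0
    | succ i => exact htail (i+1) (p i).1 (p i).2
  set v : ℕ → X := fun j => u (k j) with hv
  set x : ℕ → X := fun j => ∑ i ∈ Finset.Ico (nn j) (nn (j+1)), coef i (v j) • e i with hx
  -- perturbation estimate
  have hxv : ∀ j, ‖x j - v j‖ ≤ 2 * ε j := by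
    intro j
    have hsplit : x j = (∑ i ∈ Finset.range (nn (j+1)), coef i (v j) • e i)
        - ∑ i ∈ Finset.range (nn j), coef i (v j) • e i := by
      show (∑ i ∈ Finset.Ico (nn j) (nn (j+1)), coef i (v j) • e i) = _
      rw [Finset.sum_Ico_eq_sub _ (le_of_lt (hnnmono (Nat.lt_succ_self j)))]
    have : x j - v j = -(v j - ∑ i ∈ Finset.range (nn (j+1)), coef i (v j) • e i)
        - ∑ i ∈ Finset.range (nn j), coef i (v j) • e i := by
      rw [hsplit]; abel
    rw [this]
    calc ‖_ - _‖ ≤ ‖-(v j - ∑ i ∈ Finset.range (nn (j+1)), coef i (v j) • e i)‖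
          + ‖∑ i ∈ Finset.range (nn j), coef i (v j) • e i‖ := norm_sub_le _ _
      _ ≤ ε j + ε j := by
          rw [norm_neg]
          exact add_le_add (htail' j) (hhead' j)
      _ = 2 * ε j := by ring
  -- c₀ estimates for v
  have hvsum : ∀ (m : ℕ) (a : ℕ → ℝ),
      ∑ j ∈ Finset.range m, a j • v j = f (∑ j ∈ Finset.range m, a j • myDelta (k j)) := by
    intro m a
    rw [map_sum]
    exact Finset.sum_congr rfl fun j _ => by rw [map_smul]
  have hweval : ∀ (m : ℕ) (a : ℕ → ℝ) (j : ℕ), j < m →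
      (∑ j' ∈ Finset.range m, a j' • myDelta (k j')) (k j) = a j := by
    intro m a j hj
    rw [myC0_sum_apply _ a k]
    rw [Finset.sum_eq_single j]
    · simp
    · intro j' _ hj'
      have : k j ≠ k j' := fun h => hj' (hkmono.injective h.symm)
      simp [this]
    · intro h; exact absurd (Finset.mem_range.2 hj) h
  have hwnorm : ∀ (m : ℕ) (a : ℕ → ℝ) (M : ℝ), 0 ≤ M → (∀ j < m, |a j| ≤ M) →
      ‖∑ j' ∈ Finset.range m, a j' • myDelta (k j')‖ ≤ M := by
    intro m a M hM0 hM
    refine myC0_norm_le _ M hM0 fun m' => ?_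
    rw [myC0_sum_apply _ a k]
    by_cases hex : ∃ j ∈ Finset.range m, m' = k j
    · obtain ⟨j, hj, rfl⟩ := hex
      rw [Finset.sum_eq_single j]
      · simpa using hM j (Finset.mem_range.1 hj)
      · intro j' _ hj'
        have : k j ≠ k j' := fun h => hj' (hkmono.injective h.symm)
        simp [this]
      · intro h; exact absurd hj h
    · rw [Finset.sum_eq_zero]
      · simpa using hM0
      · intro j hj
        have : m' ≠ k j := fun h => hex ⟨j, hj, h⟩
        simp [this]
  have hvlow : ∀ (m : ℕ) (a : ℕ → ℝ) (j : ℕ), j < m →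
      c * |a j| ≤ ‖∑ j' ∈ Finset.range m, a j' • v j'‖ := by
    intro m a j hj
    rw [hvsum]
    calc c * |a j| = c * |(∑ j' ∈ Finset.range m, a j' • myDelta (k j')) (k j)| := by
          rw [hweval m a j hj]
      _ ≤ c * ‖∑ j' ∈ Finset.range m, a j' • myDelta (k j')‖ := by
          apply mul_le_mul_of_nonneg_left (myC0_abs_le_norm _ _) (le_of_lt hc)
      _ ≤ ‖f (∑ j' ∈ Finset.range m, a j' • myDelta (k j'))‖ := hf _
  have hvhigh : ∀ (m : ℕ) (a : ℕ → ℝ) (M : ℝ), 0 ≤ M → (∀ j < m, |a j| ≤ M) →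
      ‖∑ j' ∈ Finset.range m, a j' • v j'‖ ≤ ‖f‖ * M := by
    intro m a M hM0 hM
    rw [hvsum]
    calc ‖f _‖ ≤ ‖f‖ * ‖∑ j' ∈ Finset.range m, a j' • myDelta (k j')‖ := f.le_opNorm _
      _ ≤ ‖f‖ * M := mul_le_mul_of_nonneg_left (hwnorm m a M hM0 hM) (norm_nonneg f)
  -- difference between x sums and v sums
  have hdiff : ∀ (m : ℕ) (a : ℕ → ℝ) (M : ℝ), 0 ≤ M → (∀ j < m, |a j| ≤ M) →
      ‖∑ j ∈ Finset.range m, a j • x j - ∑ j ∈ Finset.range m, a j • v j‖ ≤ c / 2 * M := by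
    intro m a M hM0 hM
    rw [← Finset.sum_sub_distrib]
    calc ‖∑ j ∈ Finset.range m, (a j • x j - a j • v j)‖
        ≤ ∑ j ∈ Finset.range m, ‖a j • x j - a j • v j‖ := norm_sum_le _ _
      _ ≤ ∑ j ∈ Finset.range m, M * (2 * ε j) := by
          apply Finset.sum_le_sum
          intro j hj
          rw [← smul_sub, norm_smul, Real.norm_eq_abs]
          exact mul_le_mul (hM j (Finset.mem_range.1 hj)) (hxv j) (norm_nonneg _) hM0
      _ = M * (c/4) * ∑ j ∈ Finset.range m, (1/2:ℝ)^j := by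
          rw [Finset.mul_sum]
          exact Finset.sum_congr rfl fun j _ => by rw [hεdef]; ring
      _ ≤ M * (c/4) * 2 := by
          apply mul_le_mul_of_nonneg_left (sum_geometric_two_le m) (by positivity)
      _ = c / 2 * M := by ring
  refine ⟨x, ?_, c/2, ‖f‖ + c/2, by positivity, by positivity, ?_, ?_⟩
  · -- pre-monotonicity
    intro m n a
    rcases le_or_gt n m with hnm | hnm
    · set cc : ℕ → ℝ := fun i =>
        ∑ j ∈ Finset.range m, (if nn j ≤ i ∧ i < nn (j+1) then a j * coef i (v j) else 0) with hcc
      have hblock : ∀ j < m, ∀ i, nn j ≤ i → i < nn (j+1) → cc i = a j * coef i (v j) := by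
        intro j hj i hi1 hi2
        rw [show cc i = ∑ j' ∈ Finset.range m,
          (if nn j' ≤ i ∧ i < nn (j'+1) then a j' * coef i (v j') else 0) from rfl,
          Finset.sum_eq_single j]
        · rw [if_pos ⟨hi1, hi2⟩]
        · intro j' _ hj'
          rcases lt_or_gt_of_ne hj' with h | h
          · have : nn (j'+1) ≤ nn j := hnnmono.monotone h
            rw [if_neg]; rintro ⟨_, h2⟩; omega
          · have : nn (j+1) ≤ nn j' := hnnmono.monotone h
            rw [if_neg]; rintro ⟨h1, _⟩; omega
        · intro h; exact absurd (Finset.mem_range.2 hj) h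
      have hsum : ∀ d p₀ : ℕ, p₀ + d ≤ m →
          ∑ j ∈ Finset.Ico p₀ (p₀ + d), a j • x j
            = ∑ i ∈ Finset.Ico (nn p₀) (nn (p₀ + d)), cc i • e i := by
        intro d
        induction d with
        | zero => intro p₀ _; simp
        | succ d ih =>
            intro p₀ hd
            have hdm : p₀ + d ≤ m := by omega
            rw [show p₀ + (d+1) = (p₀ + d) + 1 from rfl]
            rw [Finset.sum_Ico_succ_top (by omega)]
            rw [← Finset.sum_Ico_consecutive _ (hnnmono.monotone (by omega : p₀ ≤ p₀ + d))
              (hnnmono.monotone (by omega : p₀ + d ≤ p₀ + d + 1))]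
            rw [ih p₀ hdm]
            congr 1
            rw [hx]
            simp only
            rw [Finset.smul_sum]
            exact Finset.sum_congr rfl fun i hi => by
              rw [Finset.mem_Ico] at hi
              rw [hblock (p₀ + d) (by omega) i hi.1 hi.2, mul_smul]
      have hIco : ∀ q ≤ m, ∀ p₀ ≤ q, ∑ j ∈ Finset.Ico p₀ q, a j • x j
          = ∑ i ∈ Finset.Ico (nn p₀) (nn q), cc i • e i := by
        intro q hq p₀ hpq
        obtain ⟨d, rfl⟩ : ∃ d, q = p₀ + d := ⟨q - p₀, by omega⟩
        exact hsum d p₀ hq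
      calc ‖∑ j ∈ Finset.Ico n m, a j • x j‖
          = ‖∑ i ∈ Finset.Ico (nn n) (nn m), cc i • e i‖ := by rw [hIco m le_rfl n hnm]
        _ ≤ ‖∑ i ∈ Finset.range (nn m), cc i • e i‖ := hpm (nn m) (nn n) cc
        _ = ‖∑ i ∈ Finset.Ico (nn 0) (nn m), cc i • e i‖ := by
            rw [hnn0, ← Finset.range_eq_Ico]
        _ = ‖∑ j ∈ Finset.Ico 0 m, a j • x j‖ := by rw [hIco m le_rfl 0 (Nat.zero_le m)]
        _ = ‖∑ j ∈ Finset.range m, a j • x j‖ := by rw [Finset.range_eq_Ico]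
    · rw [Finset.Ico_eq_empty (by omega)]
      simp
  · -- lower c₀ bound
    intro n a j hj
    have hn : 0 < n := by omega
    have hne : (Finset.range n).Nonempty := Finset.nonempty_range_iff.2 (by omega)
    set M := ((Finset.range n).sup' hne fun i => |a i|) with hM
    obtain ⟨j0, hj0, hj0eq⟩ := Finset.exists_mem_eq_sup' hne (fun i => |a i|)
    have hM0 : 0 ≤ M := by rw [hM, hj0eq]; exact abs_nonneg _
    have hMle : ∀ i < n, |a i| ≤ M := fun i hi => by
      rw [hM]; exact Finset.le_sup' (fun i => |a i|) (Finset.mem_range.2 hi)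
    have h1 : c * M ≤ ‖∑ j' ∈ Finset.range n, a j' • v j'‖ := by
      rw [hM, hj0eq]
      exact hvlow n a j0 (Finset.mem_range.1 hj0)
    have h2 := hdiff n a M hM0 hMle
    have h3 : ‖∑ j' ∈ Finset.range n, a j' • v j'‖
        ≤ ‖∑ j' ∈ Finset.range n, a j' • x j'‖ + c/2 * M := by
      calc ‖∑ j' ∈ Finset.range n, a j' • v j'‖
          ≤ ‖∑ j' ∈ Finset.range n, a j' • x j'‖
            + ‖∑ j' ∈ Finset.range n, a j' • x j' - ∑ j' ∈ Finset.range n, a j' • v j'‖ := by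
            have := norm_sub_le_norm_sub_add_norm_sub
              (∑ j' ∈ Finset.range n, a j' • v j') 0 (∑ j' ∈ Finset.range n, a j' • x j')
            -- simpler: triangle
            calc ‖∑ j' ∈ Finset.range n, a j' • v j'‖
                = ‖(∑ j' ∈ Finset.range n, a j' • x j')
                  - (∑ j' ∈ Finset.range n, a j' • x j' - ∑ j' ∈ Finset.range n, a j' • v j')‖ := by
                  congr 1; abel
              _ ≤ _ := norm_sub_le _ _
        _ ≤ _ := by linarith
    have hMj : |a j| ≤ M := hMle j hj
    nlinarith [hc]
  · -- upper c₀ bound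
    intro n a
    obtain ⟨hM0, hMle⟩ := mySup_bounds n a
    set M := ⨆ i ∈ Finset.range n, |a i| with hM
    have hMle' : ∀ j < n, |a j| ≤ M := fun j hj => hMle j (Finset.mem_range.2 hj)
    have h1 := hvhigh n a M hM0 hMle'
    have h2 := hdiff n a M hM0 hMle'
    calc ‖∑ j ∈ Finset.range n, a j • x j‖
        ≤ ‖∑ j ∈ Finset.range n, a j • v j‖
          + ‖∑ j ∈ Finset.range n, a j • x j - ∑ j ∈ Finset.range n, a j • v j‖ := by
          calc ‖∑ j ∈ Finset.range n, a j • x j‖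
              = ‖(∑ j ∈ Finset.range n, a j • v j)
                + (∑ j ∈ Finset.range n, a j • x j - ∑ j ∈ Finset.range n, a j • v j)‖ := by
                congr 1; abel
            _ ≤ _ := norm_add_le _ _
      _ ≤ ‖f‖ * M + c/2 * M := by linarith
      _ = (‖f‖ + c/2) * M := by ring
end

section
/- Let Z be a Banach space with a strongly bimonotone Schauder basis (sup over finite A ⊆ ℕ of max(‖P_A‖, ‖I − P_A‖) = 1), let X be a Banach space, Y ⊆ Z a subspace, and J: X → Y an isomorphism with ‖J^{-1}‖ ≤ 1 and ‖J‖ ≤ 1 + ε. Define |z| = inf{ ‖x‖_X + ‖z − Jx‖_Z : x ∈ X } for z ∈ Z. Then |·| is a norm on Z satisfying (1/(1+ε))‖z‖_Z ≤ |z| ≤ ‖z‖_Z for all z, J is an isometry from X into (Z, |·|), and the strong bimonotonicity constant of the basis of Z with respect to |·| is at most 1 + ε. -/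
open Finset Filter Topology

/-- renorming step in Theorem 3.10: Let `Z` be a Banach space
with a strongly bimonotone Schauder basis, `Y ⊆ Z` a subspace, and
`J : X → Y` an isomorphism with `‖J⁻¹‖ ≤ 1` and `‖J‖ ≤ 1 + ε`. Then
`|z| = inf {‖x‖_X + ‖z - Jx‖_Z : x ∈ X}` is a norm on `Z` with
`(1/(1+ε))‖z‖ ≤ |z| ≤ ‖z‖`, `J` is an isometry into `(Z, |·|)`, and the
strong bimonotonicity constant of the basis w.r.t. `|·|` is at most `1+ε`. -/
theorem inf_renorming_strongly_bimonotone
    {X Z : Type*} [NormedAddCommGroup X] [NormedSpace ℝ X] [CompleteSpace X]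
    [NormedAddCommGroup Z] [NormedSpace ℝ Z] [CompleteSpace Z]
    (z : ℕ → Z) (coef : ℕ → Z →L[ℝ] ℝ)
    (hbi : ∀ i j, coef i (z j) = if i = j then (1 : ℝ) else 0)
    (hrepr : ∀ w : Z,
      Tendsto (fun n => ∑ i ∈ Finset.range n, coef i w • z i) atTop (𝓝 w))
    -- the basis of Z is strongly bimonotone
    (hsb : ∀ (A : Finset ℕ) (w : Z),
      ‖∑ i ∈ A, coef i w • z i‖ ≤ ‖w‖ ∧ ‖w - ∑ i ∈ A, coef i w • z i‖ ≤ ‖w‖)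
    -- `Y` is a subspace of `Z` and `J : X → Y` is an isomorphism
    (Y : Submodule ℝ Z) (J : X →L[ℝ] Z)
    (hJY : ∀ x : X, J x ∈ Y) (hJsurj : ∀ y ∈ Y, ∃ x : X, J x = y)
    (ε : ℝ) (hε : 0 < ε)
    (hJinv : ∀ x : X, ‖x‖ ≤ ‖J x‖)        -- `‖J⁻¹‖ ≤ 1`
    (hJnorm : ∀ x : X, ‖J x‖ ≤ (1 + ε) * ‖x‖) :  -- `‖J‖ ≤ 1 + ε`
    let ν : Z → ℝ := fun w => ⨅ x : X, (‖x‖ + ‖w - J x‖)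
    -- ν is a norm ...
    (∀ w w' : Z, ν (w + w') ≤ ν w + ν w') ∧
    (∀ (r : ℝ) (w : Z), ν (r • w) = |r| * ν w) ∧
    (∀ w : Z, ν w = 0 → w = 0) ∧
    -- ... equivalent to the norm of Z:
    (∀ w : Z, (1 / (1 + ε)) * ‖w‖ ≤ ν w ∧ ν w ≤ ‖w‖) ∧
    -- J is an isometry from X into (Z, ν)
    (∀ x : X, ν (J x) = ‖x‖) ∧
    -- the strong bimonotonicity constant w.r.t. ν is at most 1 + ε
    (∀ (A : Finset ℕ) (w : Z),
      ν (∑ i ∈ A, coef i w • z i) ≤ (1 + ε) * ν w ∧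
      ν (w - ∑ i ∈ A, coef i w • z i) ≤ (1 + ε) * ν w) := by

  intro ν
  have hε1 : (0:ℝ) < 1 + ε := by linarith
  have hbdd : ∀ w : Z, BddBelow (Set.range fun x : X => ‖x‖ + ‖w - J x‖) := by
    intro w
    exact ⟨0, by rintro _ ⟨x, rfl⟩; positivity⟩
  have hle : ∀ w : Z, ν w ≤ ‖w‖ := by
    intro w
    have := ciInf_le (hbdd w) (0 : X)
    simpa using this
  have hge : ∀ w : Z, (1 / (1 + ε)) * ‖w‖ ≤ ν w := by
    intro w
    apply le_ciInf
    intro x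
    have h1 : ‖w‖ ≤ ‖J x‖ + ‖w - J x‖ := by
      calc ‖w‖ = ‖J x + (w - J x)‖ := by rw [add_sub_cancel]
        _ ≤ ‖J x‖ + ‖w - J x‖ := norm_add_le _ _
    have h2 := hJnorm x
    have h3 : (0:ℝ) ≤ ‖w - J x‖ := norm_nonneg _
    rw [div_mul_eq_mul_div, div_le_iff₀ hε1]
    nlinarith [norm_nonneg x]
  have hadd : ∀ w w' : Z, ν (w + w') ≤ ν w + ν w' := by
    intro w w'
    apply le_ciInf_add_ciInf
    intro x x'
    have h := ciInf_le (hbdd (w + w')) (x + x')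
    refine h.trans ?_
    have h2 : ‖w + w' - J (x + x')‖ ≤ ‖w - J x‖ + ‖w' - J x'‖ := by
      rw [map_add, show w + w' - (J x + J x') = (w - J x) + (w' - J x') from by abel]
      exact norm_add_le _ _
    have hn := norm_add_le x x'
    exact by linarith
  have hsmul_le : ∀ (r : ℝ), r ≠ 0 → ∀ w : Z, ν (r • w) ≤ |r| * ν w := by
    intro r hr w
    have habs : (0:ℝ) < |r| := abs_pos.mpr hr
    rw [mul_comm, ← div_le_iff₀ habs]
    apply le_ciInf
    intro y
    rw [div_le_iff₀ habs]
    have h := ciInf_le (hbdd (r • w)) (r • y)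
    refine h.trans (le_of_eq ?_)
    rw [map_smul, ← smul_sub, norm_smul, norm_smul, Real.norm_eq_abs]
    ring
  have hzero : ν (0:Z) = 0 := by
    refine le_antisymm (by simpa using hle 0) (le_ciInf fun x => by positivity)
  have hsmul : ∀ (r : ℝ) (w : Z), ν (r • w) = |r| * ν w := by
    intro r w
    rcases eq_or_ne r 0 with rfl | hr
    · simp [hzero]
    · have habs : (0:ℝ) < |r| := abs_pos.mpr hr
      refine le_antisymm (hsmul_le r hr w) ?_
      have h := hsmul_le r⁻¹ (inv_ne_zero hr) (r • w)
      rw [inv_smul_smul₀ hr, abs_inv] at h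
      have h2 := mul_le_mul_of_nonneg_left h (abs_nonneg r)
      rwa [← mul_assoc, mul_inv_cancel₀ (ne_of_gt habs), one_mul] at h2
  have hwz : ∀ w : Z, ν w = 0 → w = 0 := by
    intro w hw
    have h := hge w
    rw [hw] at h
    have h3 : (0:ℝ) < 1 / (1 + ε) := by positivity
    have : ‖w‖ ≤ 0 := by nlinarith [norm_nonneg w]
    exact norm_eq_zero.mp (le_antisymm this (norm_nonneg w))
  have hiso : ∀ x : X, ν (J x) = ‖x‖ := by
    intro x
    refine le_antisymm ?_ ?_
    · have := ciInf_le (hbdd (J x)) x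
      simpa using this
    · apply le_ciInf
      intro x'
      have h1 : ‖x - x'‖ ≤ ‖J x - J x'‖ := by
        have := hJinv (x - x')
        rwa [map_sub] at this
      have h2 : ‖x‖ - ‖x'‖ ≤ ‖x - x'‖ := norm_sub_norm_le x x'
      have h3 : ‖J x - J x'‖ = ‖J x - J x'‖ := rfl
      linarith
  have hub : ∀ w : Z, ‖w‖ ≤ (1 + ε) * ν w := by
    intro w
    have h := hge w
    rw [div_mul_eq_mul_div, div_le_iff₀ hε1, one_mul] at h
    linarith [h]
  refine ⟨hadd, hsmul, hwz, fun w => ⟨hge w, hle w⟩, hiso, fun A w => ⟨?_, ?_⟩⟩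
  · exact (hle _).trans ((hsb A w).1.trans (hub w))
  · exact (hle _).trans ((hsb A w).2.trans (hub w))
end

section
/- The renorming of c₀ given by ‖x‖ = max( sup_{i∈ℕ} |a_i − (1/3)a_1|, sup_{i≥3} |a_i| ) for x = (a_i) ∈ c₀ satisfies: ‖Q_m‖ = 1 for every m ≥ 3, while 4/3 ≤ ‖Q_2‖ ≤ 3/2, where Q_m(x) = (0,…,0,a_m,a_{m+1},…) is the m-th tail projection. In particular the unit vector basis is 𝔱-premonotone (with k = 3) but not pre-monotone. -/
open Finset Filter Topology

/-! Auxiliary lemmas about real suprema over `ℕ`. -/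

private lemma aux_le_sup1 {f : ℕ → ℝ} {c : ℝ} (hbd : ∀ i, f i ≤ c) (j : ℕ) :
    f j ≤ ⨆ i, f i :=
  le_ciSup ⟨c, by rintro x ⟨i, rfl⟩; exact hbd i⟩ j

private lemma aux_iSup_eq {f : ℕ → ℝ} {c : ℝ} (h1 : ∀ i, f i ≤ c) (j : ℕ)
    (h2 : f j = c) : (⨆ i, f i) = c :=
  le_antisymm (ciSup_le h1) (h2 ▸ aux_le_sup1 h1 j)

private lemma aux_inner_le {a : ℕ → ℝ} {c : ℝ} (hc : 0 ≤ c)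
    (h : ∀ i, 2 ≤ i → |a i| ≤ c) (i : ℕ) : (⨆ (_ : 2 ≤ i), |a i|) ≤ c := by
  by_cases hi : 2 ≤ i
  · rw [ciSup_const (hι := ⟨hi⟩)]; exact h i hi
  · haveI : IsEmpty (2 ≤ i) := ⟨fun h' => hi h'⟩
    rw [Real.iSup_of_isEmpty]; exact hc

private lemma aux_sup2_le {a : ℕ → ℝ} {c : ℝ} (hc : 0 ≤ c)
    (h : ∀ i, 2 ≤ i → |a i| ≤ c) : (⨆ i, ⨆ (_ : 2 ≤ i), |a i|) ≤ c :=
  ciSup_le (aux_inner_le hc h)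

private lemma aux_le_sup2 {a : ℕ → ℝ} {c : ℝ} (hbd : ∀ i, |a i| ≤ c) {j : ℕ}
    (hj : 2 ≤ j) : |a j| ≤ ⨆ i, ⨆ (_ : 2 ≤ i), |a i| := by
  have hc : 0 ≤ c := le_trans (abs_nonneg _) (hbd 0)
  have hb : BddAbove (Set.range fun i => ⨆ (_ : 2 ≤ i), |a i|) := by
    refine ⟨c, ?_⟩
    rintro x ⟨i, rfl⟩
    exact aux_inner_le hc (fun i _ => hbd i) i
  calc |a j| = ⨆ (_ : 2 ≤ j), |a j| := (ciSup_const (hι := ⟨hj⟩)).symm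
    _ ≤ _ := le_ciSup hb j

private lemma aux_sup2_nonneg (a : ℕ → ℝ) :
    0 ≤ ⨆ i, ⨆ (_ : 2 ≤ i), |a i| :=
  Real.iSup_nonneg fun _ => Real.iSup_nonneg fun _ => abs_nonneg _

private lemma aux_bound_of_tendsto {a : ℕ → ℝ} (h : Tendsto a atTop (𝓝 0)) :
    ∃ c, 0 ≤ c ∧ ∀ i, |a i| ≤ c := by
  have h' : Tendsto (fun i => |a i|) atTop (𝓝 0) := by simpa using h.abs
  obtain ⟨c, hc⟩ := h'.bddAbove_range
  exact ⟨c, le_trans (abs_nonneg _) (hc ⟨0, rfl⟩), fun i => hc ⟨i, rfl⟩⟩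

/-- Remark 3.6: For the renorming of `c₀` given by
`‖a‖ = max(sup_i |a_i - a_1/3|, sup_{i≥3} |a_i|)` (written 0-indexed below:
`a_1 = a 0` and `i ≥ 3` becomes `2 ≤ i`), the tail maps `Q_m` (paper-indexed,
`Q_m` keeps the coordinates with index `≥ m`; 0-indexed this is `T (m-1)`
where `T n` keeps coordinates with index `≥ n`) satisfy `‖Q_m‖ = 1` for all
`m ≥ 3` while `4/3 ≤ ‖Q_2‖ ≤ 3/2`. In particular the unit vector basis is
`𝔱`-premonotone (with `k = 3`) but not pre-monotone. -/
theorem c0_renorming_t_premonotone_not_premonotone :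
    let N : (ℕ → ℝ) → ℝ := fun a =>
      max (⨆ i, |a i - (1 / 3) * a 0|) (⨆ i, ⨆ (_ : 2 ≤ i), |a i|)
    let T : ℕ → (ℕ → ℝ) → (ℕ → ℝ) := fun n a i => if n ≤ i then a i else 0
    -- `‖Q_m‖ = 1` for every `m ≥ 3`
    (∀ m : ℕ, 3 ≤ m →
      (∀ a : ℕ → ℝ, Tendsto a atTop (𝓝 0) → N (T (m - 1) a) ≤ N a) ∧
      (∃ a : ℕ → ℝ, Tendsto a atTop (𝓝 0) ∧ 0 < N a ∧ N (T (m - 1) a) = N a)) ∧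
    -- `‖Q_2‖ ≤ 3/2`
    (∀ a : ℕ → ℝ, Tendsto a atTop (𝓝 0) → N (T 1 a) ≤ (3 / 2) * N a) ∧
    -- `4/3 ≤ ‖Q_2‖`
    (∃ a : ℕ → ℝ, Tendsto a atTop (𝓝 0) ∧ 0 < N a ∧
      (4 / 3) * N a ≤ N (T 1 a)) ∧
    -- in particular the basis is not pre-monotone
    (∃ a : ℕ → ℝ, Tendsto a atTop (𝓝 0) ∧ N a < N (T 1 a)) := by
  intro N T
  have hNnonneg : ∀ a : ℕ → ℝ, 0 ≤ N a := fun a =>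
    le_trans (aux_sup2_nonneg a) (le_max_right _ _)
  -- the special witness for parts 3 and 4
  set w : ℕ → ℝ := fun i => if i = 0 then 3 else if i = 1 then 4 else 0 with hw
  have hwT : Tendsto w atTop (𝓝 0) := by
    apply Tendsto.congr' _ tendsto_const_nhds
    filter_upwards [eventually_ge_atTop 2] with i hi
    have h0 : i ≠ 0 := by omega
    have h1 : i ≠ 1 := by omega
    simp [hw, h0, h1]
  have hNw : N w = 3 := by
    simp only [N]
    have h0 : (1 / 3 : ℝ) * w 0 = 1 := by norm_num [hw]
    have h1 : (⨆ i, |w i - (1 / 3) * w 0|) = 3 := by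
      apply aux_iSup_eq (c := 3) _ 1
      · norm_num [hw]
      · intro i
        rw [h0]
        rcases i with _ | _ | i <;> norm_num [hw]
    have h2 : (⨆ i, ⨆ (_ : 2 ≤ i), |w i|) ≤ 3 := by
      apply aux_sup2_le (by norm_num)
      intro i hi
      have h0 : i ≠ 0 := by omega
      have h1 : i ≠ 1 := by omega
      simp [hw, h0, h1]
    rw [h1, max_eq_left h2]
  have hNTw : N (T 1 w) = 4 := by
    simp only [N, T]
    have h0 : (1 / 3 : ℝ) * (if (1 : ℕ) ≤ (0 : ℕ) then w 0 else 0) = 0 := by norm_num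
    have h1 : (⨆ i, |(if 1 ≤ i then w i else 0)
        - (1 / 3) * (if (1:ℕ) ≤ (0:ℕ) then w 0 else 0)|) = 4 := by
      apply aux_iSup_eq (c := 4) _ 1
      · norm_num [hw]
      · intro i
        rw [h0]
        rcases i with _ | _ | i <;> norm_num [hw]
    have h2 : (⨆ i, ⨆ (_ : 2 ≤ i), |if 1 ≤ i then w i else 0|) ≤ 4 := by
      apply aux_sup2_le (by norm_num)
      intro i hi
      have h0 : i ≠ 0 := by omega
      have h1 : i ≠ 1 := by omega
      have h2 : 1 ≤ i := by omega
      simp [hw, h0, h1, h2]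
    rw [h1, max_eq_left h2]
  refine ⟨?_, ?_, ?_, ?_⟩
  · -- Part 1 : ‖Q_m‖ = 1 for m ≥ 3
    intro m hm
    set n := m - 1 with hn
    have hn2 : 2 ≤ n := by omega
    constructor
    · intro a ha
      obtain ⟨c, hc0, hc⟩ := aux_bound_of_tendsto ha
      have hb0 : (if n ≤ 0 then a 0 else 0) = 0 := by
        rw [if_neg (by omega)]
      have hterm : ∀ i, |(if n ≤ i then a i else 0)| ≤ N a := by
        intro i
        by_cases hi : n ≤ i
        · rw [if_pos hi]
          exact le_trans (aux_le_sup2 hc (by omega)) (le_max_right _ _)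
        · rw [if_neg hi]; simpa using hNnonneg a
      simp only [N, T]
      apply max_le
      · apply ciSup_le
        intro i
        rw [hb0, mul_zero, sub_zero]
        exact hterm i
      · apply aux_sup2_le (hNnonneg a)
        intro i _
        exact hterm i
    · refine ⟨fun i => if i = n then 1 else 0, ?_, ?_, ?_⟩
      · apply Tendsto.congr' _ tendsto_const_nhds
        filter_upwards [eventually_ge_atTop (n + 1)] with i hi
        have h0 : i ≠ n := by omega
        simp [h0]
      · have hbd : ∀ i, |(if i = n then (1 : ℝ) else 0)| ≤ 1 := by
          intro i; split_ifs <;> norm_num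
        have key : (1 : ℝ) ≤ N fun i => if i = n then 1 else 0 := by
          have h := aux_le_sup2 (a := fun i => if i = n then (1 : ℝ) else 0) hbd hn2
          simp only [if_pos rfl] at h
          calc (1 : ℝ) = |(1 : ℝ)| := by norm_num
            _ ≤ _ := le_trans h (le_max_right _ _)
        linarith
      · have hT : T n (fun i => if i = n then (1 : ℝ) else 0)
            = fun i => if i = n then 1 else 0 := by
          funext i
          show (if n ≤ i then (if i = n then (1:ℝ) else 0) else 0)
              = if i = n then 1 else 0
          by_cases hi : n ≤ i
          · rw [if_pos hi]
          · rw [if_neg hi, if_neg (by omega : ¬ i = n)]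
        rw [hT]
  · -- Part 2 : ‖Q_2‖ ≤ 3/2
    intro a ha
    obtain ⟨c, hc0, hc⟩ := aux_bound_of_tendsto ha
    have hbd1 : ∀ i, |a i - (1 / 3) * a 0| ≤ c + (1 / 3) * |a 0| := by
      intro i
      calc |a i - (1 / 3) * a 0| ≤ |a i| + |(1 / 3) * a 0| := abs_sub _ _
        _ ≤ c + (1 / 3) * |a 0| := by
            rw [abs_mul]
            have h13 : |(1 / 3 : ℝ)| = 1 / 3 := by norm_num
            rw [h13]
            exact add_le_add (hc i) le_rfl
    have hM : ∀ i, |a i - (1 / 3) * a 0| ≤ N a := fun i =>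
      le_trans (aux_le_sup1 hbd1 i) (le_max_left _ _)
    have ha0 : |a 0| ≤ (3 / 2) * N a := by
      have h := hM 0
      have h23 : |a 0 - (1 / 3) * a 0| = (2 / 3) * |a 0| := by
        rw [show a 0 - (1 / 3) * a 0 = (2 / 3) * a 0 by ring, abs_mul]
        norm_num
      rw [h23] at h
      linarith
    have ha1 : |a 1| ≤ (3 / 2) * N a := by
      have h := hM 1
      have htr : |a 1| ≤ |a 1 - (1 / 3) * a 0| + (1 / 3) * |a 0| := by
        calc |a 1| = |(a 1 - (1 / 3) * a 0) + (1 / 3) * a 0| := by ring_nf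
          _ ≤ |a 1 - (1 / 3) * a 0| + |(1 / 3) * a 0| := abs_add_le _ _
          _ = |a 1 - (1 / 3) * a 0| + (1 / 3) * |a 0| := by
              rw [abs_mul]; norm_num
      have hN := hNnonneg a
      nlinarith
    have hge2 : ∀ i, 2 ≤ i → |a i| ≤ N a := fun i hi =>
      le_trans (aux_le_sup2 hc hi) (le_max_right _ _)
    have hN32 : 0 ≤ (3 / 2) * N a := by have := hNnonneg a; linarith
    have hterm : ∀ i, |(if 1 ≤ i then a i else 0)| ≤ (3 / 2) * N a := by
      intro i
      by_cases hi : 1 ≤ i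
      · rw [if_pos hi]
        rcases Nat.lt_or_ge i 2 with h2 | h2
        · have hi1 : i = 1 := by omega
          rw [hi1]; exact ha1
        · have hN := hNnonneg a
          have := hge2 i h2
          linarith
      · rw [if_neg hi]; simpa using hN32
    simp only [N, T]
    apply max_le
    · apply ciSup_le
      intro i
      rw [if_neg (by omega : ¬ (1:ℕ) ≤ (0:ℕ)), mul_zero, sub_zero]
      exact hterm i
    · apply aux_sup2_le hN32
      intro i _
      exact hterm i
  · -- Part 3 : 4/3 ≤ ‖Q_2‖
    exact ⟨w, hwT, by rw [hNw]; norm_num, by rw [hNw, hNTw]; norm_num⟩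
  · -- Part 4 : not pre-monotone
    exact ⟨w, hwT, by rw [hNw, hNTw]; norm_num⟩
end

section
/- Let X be a Banach space with a Schauder basis (e_i) that is shrinking and not boundedly complete. Then (e_i) admits a block basic sequence (x_n) that is semi-normalized, weakly null, and strongly bounded (sup_m ‖∑_{n=1}^m x_n‖ < ∞). -/
open Finset Filter Topology

/-- step in Theorem 3.7 (iii): If a Schauder basis `(e_i)` of a
Banach space `X` is shrinking (the coordinate functionals form a basis of
`X*`) but not boundedly complete, then `(e_i)` admits a block basic sequence
`(x_n)` that is semi-normalized, weakly null, and strongly bounded. -/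
theorem shrinking_notBoundedlyComplete_block
    {X : Type*} [NormedAddCommGroup X] [NormedSpace ℝ X] [CompleteSpace X]
    (e : ℕ → X) (coef : ℕ → X →L[ℝ] ℝ)
    (hbi : ∀ i j, coef i (e j) = if i = j then (1 : ℝ) else 0)
    (hrepr : ∀ y : X,
      Tendsto (fun n => ∑ i ∈ Finset.range n, coef i y • e i) atTop (𝓝 y))
    -- the basis is shrinking: `(e_i^*)` is a Schauder basis of `X*`, the
    -- coefficients of `f ∈ X*` being `f (e i)`
    (hshr : ∀ f : X →L[ℝ] ℝ,
      Tendsto (fun n => ∑ i ∈ Finset.range n, f (e i) • coef i) atTop (𝓝 f))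
    -- the basis is not boundedly complete
    (hnbc : ∃ b : ℕ → ℝ,
      (∃ M : ℝ, ∀ N : ℕ, ‖∑ i ∈ Finset.range N, b i • e i‖ ≤ M) ∧
      ¬ ∃ y : X, Tendsto (fun N => ∑ i ∈ Finset.range N, b i • e i) atTop (𝓝 y)) :
    -- there is a block basic sequence `(x_n)` of `(e_i)` ...
    ∃ (x : ℕ → X) (F : ℕ → Finset ℕ) (lam : ℕ → ℝ),
      (∀ n, (F n).Nonempty) ∧
      (∀ n, ∀ i ∈ F n, ∀ j ∈ F (n + 1), i < j) ∧
      (∀ n, x n = ∑ j ∈ F n, lam j • e j) ∧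
      (∀ n, ∀ j ∈ F n, lam j ≠ 0) ∧
      -- ... which is semi-normalized ...
      (∃ c C : ℝ, 0 < c ∧ ∀ n, c ≤ ‖x n‖ ∧ ‖x n‖ ≤ C) ∧
      -- ... weakly null ...
      (∀ f : X →L[ℝ] ℝ, Tendsto (fun n => f (x n)) atTop (𝓝 0)) ∧
      -- ... and strongly bounded
      (∃ M : ℝ, ∀ m : ℕ, ‖∑ n ∈ Finset.range m, x n‖ ≤ M) := by

  classical
  obtain ⟨b, ⟨M, hM⟩, hdiv⟩ := hnbc
  set S : ℕ → X := fun N => ∑ i ∈ Finset.range N, b i • e i with hSdef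
  have hM0 : 0 ≤ M := le_trans (norm_nonneg (S 0)) (hM 0)
  have hnc : ¬ CauchySeq S := fun h => hdiv (cauchySeq_tendsto_of_complete h)
  rw [Metric.cauchySeq_iff] at hnc
  push_neg at hnc
  obtain ⟨ε, hε, hnc⟩ := hnc
  have step : ∀ k : ℕ, ∃ k', k < k' ∧ ε / 2 ≤ ‖S k' - S k‖ := by
    intro k
    obtain ⟨p, hp, q, hq, hpq⟩ := hnc (k + 1)
    rw [dist_eq_norm] at hpq
    by_cases h : ε / 2 ≤ ‖S p - S k‖
    · exact ⟨p, hp, h⟩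
    · refine ⟨q, hq, ?_⟩
      have h1 : ‖S p - S q‖ ≤ ‖S p - S k‖ + ‖S q - S k‖ := by
        have heq : S p - S q = (S p - S k) - (S q - S k) := by abel
        rw [heq]; exact norm_sub_le _ _
      linarith
  choose next hlt hnorm using step
  set m : ℕ → ℕ := fun n => next^[n] 0 with hmdef
  have hmsucc : ∀ n, m (n + 1) = next (m n) := fun n => Function.iterate_succ_apply' _ _ _
  have hmono : StrictMono m := strictMono_nat_of_lt_succ fun n => by
    rw [hmsucc]; exact hlt _
  set x : ℕ → X := fun n => S (m (n + 1)) - S (m n) with hxdef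
  set F : ℕ → Finset ℕ := fun n => (Finset.Ico (m n) (m (n + 1))).filter (fun i => b i ≠ 0)
    with hFdef
  have hxIco : ∀ n, x n = ∑ j ∈ Finset.Ico (m n) (m (n + 1)), b j • e j := by
    intro n
    rw [Finset.sum_Ico_eq_sub _ (hmono (Nat.lt_succ_self n)).le]
  have hx : ∀ n, x n = ∑ j ∈ F n, b j • e j := by
    intro n
    rw [hxIco n, hFdef]
    exact (Finset.sum_filter_of_ne (fun i _ hi => by
      intro hb; apply hi; rw [hb, zero_smul])).symm
  have hxlow : ∀ n, ε / 2 ≤ ‖x n‖ := fun n => by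
    rw [hxdef]; simpa [hmsucc] using hnorm (m n)
  have hxhigh : ∀ n, ‖x n‖ ≤ 2 * M := fun n => by
    calc ‖x n‖ ≤ ‖S (m (n + 1))‖ + ‖S (m n)‖ := norm_sub_le _ _
    _ ≤ 2 * M := by have := hM (m (n + 1)); have := hM (m n); simp only [hSdef] at *; linarith
  -- coefficient computation
  have hcoefS : ∀ i N, coef i (S N) = if i < N then b i else 0 := by
    intro i N
    simp only [hSdef, map_sum, map_smul, hbi, smul_eq_mul, mul_ite, mul_one, mul_zero]
    rw [Finset.sum_ite_eq (Finset.range N) i (fun j => b j)]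
    simp [Finset.mem_range]
  have hcoefx : ∀ n i, i < m n → coef i (x n) = 0 := by
    intro n i hi
    have h2 : i < m (n + 1) := lt_trans hi (hmono (Nat.lt_succ_self n))
    simp [hxdef, hcoefS, hi, h2]
  refine ⟨x, F, b, ?_, ?_, hx, ?_, ⟨ε / 2, 2 * M, half_pos hε, fun n => ⟨hxlow n, hxhigh n⟩⟩,
    ?_, ?_⟩
  · intro n
    apply Finset.nonempty_of_sum_ne_zero (f := fun j => b j • e j)
    rw [← hx]
    intro h0
    have := hxlow n
    rw [h0, norm_zero] at this
    linarith
  · intro n i hi j hj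
    rw [hFdef] at hi hj
    simp only [Finset.mem_filter, Finset.mem_Ico] at hi hj
    exact lt_of_lt_of_le hi.1.2 hj.1.1
  · intro n j hj
    rw [hFdef] at hj
    exact (Finset.mem_filter.1 hj).2
  · -- weakly null
    intro f
    rw [Metric.tendsto_atTop]
    intro δ hδ
    have hshrf := (tendsto_iff_norm_sub_tendsto_zero).1 (hshr f)
    have hpos : 0 < δ / (2 * M + 1) := by positivity
    obtain ⟨N, hN⟩ := (Metric.tendsto_atTop.1 hshrf) (δ / (2 * M + 1)) hpos
    refine ⟨N, fun n hn => ?_⟩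
    set g : X →L[ℝ] ℝ := ∑ i ∈ Finset.range N, f (e i) • coef i with hgdef
    have hgx : g (x n) = 0 := by
      rw [hgdef]
      simp only [ContinuousLinearMap.coe_sum', Finset.sum_apply,
        ContinuousLinearMap.coe_smul', Pi.smul_apply, smul_eq_mul]
      apply Finset.sum_eq_zero
      intro i hi
      rw [hcoefx n i (lt_of_lt_of_le (Finset.mem_range.1 hi) (le_trans hn (hmono.le_apply)))]
      ring
    have hgN : ‖g - f‖ < δ / (2 * M + 1) := by
      have := hN N le_rfl
      rw [dist_zero_right, norm_norm] at this
      exact this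
    have key : |f (x n)| ≤ ‖g - f‖ * (2 * M) := by
      have h1 : f (x n) = -((g - f) (x n)) := by
        simp [hgx]
      rw [h1, abs_neg]
      calc |(g - f) (x n)| ≤ ‖g - f‖ * ‖x n‖ := (g - f).le_opNorm _
      _ ≤ ‖g - f‖ * (2 * M) := by
          exact mul_le_mul_of_nonneg_left (hxhigh n) (norm_nonneg _)
    rw [Real.dist_eq, sub_zero]
    have h2M : ‖g - f‖ * (2 * M) < δ := by
      have h1 : ‖g - f‖ * (2 * M) ≤ ‖g - f‖ * (2 * M + 1) := by
        apply mul_le_mul_of_nonneg_left _ (norm_nonneg _); linarith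
      have h2 : ‖g - f‖ * (2 * M + 1) < δ / (2 * M + 1) * (2 * M + 1) := by
        apply mul_lt_mul_of_pos_right hgN; linarith
      rw [div_mul_cancel₀] at h2
      · linarith
      · linarith
    linarith [key]
  · -- strongly bounded
    refine ⟨2 * M, fun k => ?_⟩
    have htel : ∑ n ∈ Finset.range k, x n = S (m k) - S (m 0) :=
      Finset.sum_range_sub (fun n => S (m n)) k
    rw [htel]
    calc ‖S (m k) - S (m 0)‖ ≤ ‖S (m k)‖ + ‖S (m 0)‖ := norm_sub_le _ _
    _ ≤ 2 * M := by have := hM (m k); have := hM (m 0); simp only [hSdef] at *; linarith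
end
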